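/- arXiv:1604.01643 — 4 statements merged into one kernel-verified Lean document; each statement's English description precedes it below -/
import Mathlib

section
/- Let g ≥ 1 and let X₁,…,X_g, Y₁,…,Y_g, Z₁,…,Z_g be random variables on a common probability space, each taking values in a finite set. Write X̄_i = (X₁,…,X_i), Ȳ_i = (Y₁,…,Y_i), Z̄_i = (Z₁,…,Z_i), with the convention that X̄₀, Ȳ₀, Z̄₀ are constant (empty). Assume: (a) H(Z₁) = 0; (b) for every 1 ≤ i ≤ g, H(Z̄_i | X̄_{i−1}, Ȳ_{i−1}) = 0; (c) for every 2 ≤ i ≤ g, H(Ȳ_{i−2} | Z̄_{i−1}, X̄_{i−1}) = H(Ȳ_{i−2} | Z̄_{i−1}, X̄_{i−2}). Then Σ_{i=1}^g H(Z_i | X̄_{i−1}, Z̄_{i−1}) ≤ Σ_{i=1}^g H(Y_i | X̄_i, Ȳ_{i−1}). Consequently, if 0 < Σ_{i=1}^g H(Y_i | X̄_i, Ȳ_{i−1}), the ratio IUR := Σ_{i=1}^g H(Z_i | X̄_{i−1}, Z̄_{i−1}) / Σ_{i=1}^g H(Y_i | X̄_i, Ȳ_{i−1}) satisfies 0 ≤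 IUR ≤ 1. -/
open MeasureTheory
open scoped ENNReal

/-- Shannon entropy of a finitely-valued random variable `X`:
`H(X) = −Σ_s p(s) log p(s)` (natural logarithm), with the convention `0 · log 0 = 0`. -/
noncomputable def shannonEntropy {Ω S : Type*} [MeasurableSpace Ω] [Fintype S]
    (μ : Measure Ω) (X : Ω → S) : ℝ :=
  -∑ s : S, (μ (X ⁻¹' {s})).toReal * Real.log (μ (X ⁻¹' {s})).toReal

/-- Conditional Shannon entropy of finitely-valued random variables:
`H(X | Y) = −Σ_{s,t} p(s,t) log (p(s,t) / p(t))`, with the convention that terms with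
`p(s,t) = 0` vanish. -/
noncomputable def condEntropy {Ω S T : Type*} [MeasurableSpace Ω] [Fintype S] [Fintype T]
    (μ : Measure Ω) (X : Ω → S) (Y : Ω → T) : ℝ :=
  -∑ s : S, ∑ t : T,
    (μ (X ⁻¹' {s} ∩ Y ⁻¹' {t})).toReal *
      Real.log ((μ (X ⁻¹' {s} ∩ Y ⁻¹' {t})).toReal / (μ (Y ⁻¹' {t})).toReal)

/-- The history tuple `X̄_i = (X₁, …, X_i)` of a family `X₁, X₂, …` of random variables
(`X̄_0` is the empty, constant, tuple). -/
def bar {Ω S : Type*} (X : ℕ → Ω → S) (i : ℕ) : Ω → (Fin i → S) :=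
  fun ω j => X (j.1 + 1) ω

namespace IURAux

lemma mul_log_div_nonpos {a b : ℝ} (ha : 0 ≤ a) (hab : a ≤ b) :
    a * Real.log (a / b) ≤ 0 := by
  rcases ha.eq_or_lt with h | h
  · simp [← h]
  · have hb : 0 < b := lt_of_lt_of_le h hab
    have hlog : Real.log (a / b) ≤ 0 :=
      Real.log_nonpos (by positivity) ((div_le_one hb).mpr hab)
    nlinarith

/-- The log-sum inequality over a finite set. -/
lemma sum_log_sum {ι : Type*} (s : Finset ι) (a b : ι → ℝ)
    (ha : ∀ i ∈ s, 0 ≤ a i) (hab : ∀ i ∈ s, a i ≤ b i) :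
    (∑ i ∈ s, a i) * Real.log ((∑ i ∈ s, a i) / (∑ i ∈ s, b i)) ≤
      ∑ i ∈ s, a i * Real.log (a i / b i) := by
  set A := ∑ i ∈ s, a i with hA
  set B := ∑ i ∈ s, b i with hB
  have hA0 : 0 ≤ A := Finset.sum_nonneg ha
  rcases hA0.eq_or_lt with h0 | hApos
  · have hz : ∀ i ∈ s, a i = 0 :=
      (Finset.sum_eq_zero_iff_of_nonneg ha).mp h0.symm
    have h1 : ∑ i ∈ s, a i * Real.log (a i / b i) = 0 :=
      Finset.sum_eq_zero fun i hi => by rw [hz i hi]; ring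
    rw [h1, ← h0]
    simp
  · have hAB : A ≤ B := Finset.sum_le_sum hab
    have hBpos : 0 < B := lt_of_lt_of_le hApos hAB
    have key : ∀ i ∈ s, a i * Real.log (A / B) + (a i - b i * (A / B)) ≤
        a i * Real.log (a i / b i) := by
      intro i hi
      rcases (ha i hi).eq_or_lt with h0i | hpos
      · rw [← h0i]
        have hbi : 0 ≤ b i := le_trans (ha i hi) (hab i hi)
        have : 0 ≤ b i * (A / B) := by positivity
        simp only [zero_mul, zero_add, zero_sub, zero_div]
        nlinarith
      · have hbi : 0 < b i := lt_of_lt_of_le hpos (hab i hi)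
        have hlog : Real.log (b i * A / (a i * B)) ≤ b i * A / (a i * B) - 1 :=
          Real.log_le_sub_one_of_pos (by positivity)
        have hsplit : Real.log (A / B) =
            Real.log (a i / b i) + Real.log (b i * A / (a i * B)) := by
          rw [← Real.log_mul (by positivity) (by positivity)]
          congr 1
          field_simp
        have hmul : a i * (b i * A / (a i * B)) = b i * (A / B) := by
          field_simp
        nlinarith [mul_le_mul_of_nonneg_left hlog (le_of_lt hpos)]
    calc A * Real.log (A / B)
        = ∑ i ∈ s, (a i * Real.log (A / B) + (a i - b i * (A / B))) := by
          rw [Finset.sum_add_distrib, ← Finset.sum_mul, Finset.sum_sub_distrib,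
            ← Finset.sum_mul, ← hA, ← hB]
          have : B * (A / B) = A := by field_simp
          rw [this]; ring
      _ ≤ ∑ i ∈ s, a i * Real.log (a i / b i) := Finset.sum_le_sum key


variable {Ω : Type*} [MeasurableSpace Ω] {μ : Measure Ω}

/-- all preimages of singletons are measurable -/
def MPre {S : Type*} (X : Ω → S) : Prop := ∀ s, MeasurableSet (X ⁻¹' {s})

lemma pair_preimage {S T : Type*} (X : Ω → S) (Y : Ω → T) (s : S) (t : T) :
    (fun ω => (X ω, Y ω)) ⁻¹' {(s, t)} = X ⁻¹' {s} ∩ Y ⁻¹' {t} := by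
  ext ω; simp [Prod.ext_iff]

lemma MPre.pair {S T : Type*} {X : Ω → S} {Y : Ω → T} (hX : MPre X) (hY : MPre Y) :
    MPre (fun ω => (X ω, Y ω)) := by
  rintro ⟨s, t⟩
  rw [pair_preimage]
  exact (hX s).inter (hY t)

lemma toReal_meas_fiber {T T' : Type*} [Fintype T] [DecidableEq T'] [IsFiniteMeasure μ]
    {W : Ω → T} (hW : MPre W) {A : Set Ω} (hA : MeasurableSet A) (f : T → T') (t' : T') :
    (μ (A ∩ (fun ω => f (W ω)) ⁻¹' {t'})).toReal
      = ∑ t ∈ Finset.univ.filter (fun t => f t = t'), (μ (A ∩ W ⁻¹' {t})).toReal := by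
  have hset : A ∩ (fun ω => f (W ω)) ⁻¹' {t'}
      = ⋃ t ∈ Finset.univ.filter (fun t => f t = t'), A ∩ W ⁻¹' {t} := by
    ext ω
    simp only [Set.mem_inter_iff, Set.mem_preimage, Set.mem_singleton_iff, Set.mem_iUnion,
      Finset.mem_filter, Finset.mem_univ, true_and]
    constructor
    · rintro ⟨hωA, hf⟩; exact ⟨W ω, hf, hωA, rfl⟩
    · rintro ⟨t, hft, hωA, hWt⟩; exact ⟨hωA, by rw [hWt, hft]⟩
  rw [hset, measure_biUnion_finset ?_ (fun t _ => hA.inter (hW t))]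
  · exact ENNReal.toReal_sum fun t _ => measure_ne_top μ _
  · intro t1 _ t2 _ hne
    refine Set.disjoint_left.mpr fun ω h1 h2 => hne ?_
    rw [← h1.2, ← h2.2]

lemma toReal_meas_partition {T : Type*} [Fintype T] [IsFiniteMeasure μ]
    {W : Ω → T} (hW : MPre W) {A : Set Ω} (hA : MeasurableSet A) :
    (μ A).toReal = ∑ t : T, (μ (A ∩ W ⁻¹' {t})).toReal := by
  have h := toReal_meas_fiber (μ := μ) hW hA (fun _ => ()) ()
  have h1 : (fun ω => ()) ⁻¹' {()} = (Set.univ : Set Ω) := by ext ω; simp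
  rw [h1, Set.inter_univ] at h
  rw [h]
  apply Finset.sum_congr _ fun _ _ => rfl
  ext t; simp

variable {S T : Type*} [Fintype S] [Fintype T]

lemma condEntropy_nonneg [IsFiniteMeasure μ] (X : Ω → S) (Y : Ω → T) :
    0 ≤ condEntropy μ X Y := by
  rw [condEntropy, neg_nonneg]
  refine Finset.sum_nonpos fun s _ => Finset.sum_nonpos fun t _ => ?_
  exact mul_log_div_nonpos ENNReal.toReal_nonneg
    (ENNReal.toReal_mono (measure_ne_top μ _) (measure_mono Set.inter_subset_right))

lemma condEntropy_eq_zero_of_fun {X : Ω → S} {Y : Ω → T} (f : T → S)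
    (h : ∀ ω, X ω = f (Y ω)) : condEntropy μ X Y = 0 := by
  rw [condEntropy, neg_eq_zero]
  refine Finset.sum_eq_zero fun s _ => Finset.sum_eq_zero fun t _ => ?_
  by_cases hst : s = f t
  · have hXY : X ⁻¹' {s} ∩ Y ⁻¹' {t} = Y ⁻¹' {t} := by
      ext ω
      simp only [Set.mem_inter_iff, Set.mem_preimage, Set.mem_singleton_iff]
      constructor
      · exact fun h' => h'.2
      · intro h'; exact ⟨by rw [h ω, h', hst], h'⟩
    rw [hXY]
    rcases eq_or_ne (μ (Y ⁻¹' {t})).toReal 0 with h0 | h0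
    · simp [h0]
    · rw [div_self h0, Real.log_one, mul_zero]
  · have hXY : X ⁻¹' {s} ∩ Y ⁻¹' {t} = ∅ := by
      ext ω
      simp only [Set.mem_inter_iff, Set.mem_preimage, Set.mem_singleton_iff,
        Set.mem_empty_iff_false, iff_false, not_and]
      intro hXs hYt
      exact hst (by rw [← hXs, h ω, hYt])
    simp [hXY]

variable {S' T' : Type*} [Fintype S'] [Fintype T']

/-- recoding the conditioned variable by an injective map leaves `condEntropy` unchanged -/
lemma condEntropy_comp_left {X : Ω → S} (Y : Ω → T) {f : S → S'} (hf : Function.Injective f) :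
    condEntropy μ (fun ω => f (X ω)) Y = condEntropy μ X Y := by
  classical
  rw [condEntropy, condEntropy, neg_inj]
  calc ∑ s' : S', ∑ t : T,
        (μ ((fun ω => f (X ω)) ⁻¹' {s'} ∩ Y ⁻¹' {t})).toReal *
          Real.log ((μ ((fun ω => f (X ω)) ⁻¹' {s'} ∩ Y ⁻¹' {t})).toReal / (μ (Y ⁻¹' {t})).toReal)
      = ∑ s' ∈ Finset.univ.image f, ∑ t : T,
        (μ ((fun ω => f (X ω)) ⁻¹' {s'} ∩ Y ⁻¹' {t})).toReal *
          Real.log ((μ ((fun ω => f (X ω)) ⁻¹' {s'} ∩ Y ⁻¹' {t})).toReal / (μ (Y ⁻¹' {t})).toReal) := by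
        refine (Finset.sum_subset (Finset.subset_univ _) fun s' _ hs' => ?_).symm
        have : (fun ω => f (X ω)) ⁻¹' {s'} = ∅ := by
          ext ω
          simp only [Set.mem_preimage, Set.mem_singleton_iff, Set.mem_empty_iff_false, iff_false]
          intro hc
          exact hs' (Finset.mem_image.mpr ⟨X ω, Finset.mem_univ _, hc⟩)
        simp [this]
    _ = ∑ s : S, ∑ t : T,
        (μ (X ⁻¹' {s} ∩ Y ⁻¹' {t})).toReal *
          Real.log ((μ (X ⁻¹' {s} ∩ Y ⁻¹' {t})).toReal / (μ (Y ⁻¹' {t})).toReal) := by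
        rw [Finset.sum_image (fun x _ y _ h => hf h)]
        refine Finset.sum_congr rfl fun s _ => ?_
        have : (fun ω => f (X ω)) ⁻¹' {f s} = X ⁻¹' {s} := by
          ext ω; simp [hf.eq_iff]
        rw [this]

/-- recoding the conditioning variable by an injective map leaves `condEntropy` unchanged -/
lemma condEntropy_comp_right (X : Ω → S) {Y : Ω → T} {f : T → T'} (hf : Function.Injective f) :
    condEntropy μ X (fun ω => f (Y ω)) = condEntropy μ X Y := by
  classical
  rw [condEntropy, condEntropy, neg_inj]
  refine Finset.sum_congr rfl fun s _ => ?_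
  calc ∑ t' : T',
        (μ (X ⁻¹' {s} ∩ (fun ω => f (Y ω)) ⁻¹' {t'})).toReal *
          Real.log ((μ (X ⁻¹' {s} ∩ (fun ω => f (Y ω)) ⁻¹' {t'})).toReal /
            (μ ((fun ω => f (Y ω)) ⁻¹' {t'})).toReal)
      = ∑ t' ∈ Finset.univ.image f,
        (μ (X ⁻¹' {s} ∩ (fun ω => f (Y ω)) ⁻¹' {t'})).toReal *
          Real.log ((μ (X ⁻¹' {s} ∩ (fun ω => f (Y ω)) ⁻¹' {t'})).toReal /
            (μ ((fun ω => f (Y ω)) ⁻¹' {t'})).toReal) := by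
        refine (Finset.sum_subset (Finset.subset_univ _) fun t' _ ht' => ?_).symm
        have : (fun ω => f (Y ω)) ⁻¹' {t'} = ∅ := by
          ext ω
          simp only [Set.mem_preimage, Set.mem_singleton_iff, Set.mem_empty_iff_false, iff_false]
          intro hc
          exact ht' (Finset.mem_image.mpr ⟨Y ω, Finset.mem_univ _, hc⟩)
        simp [this]
    _ = _ := by
        rw [Finset.sum_image (fun x _ y _ h => hf h)]
        refine Finset.sum_congr rfl fun t _ => ?_
        have : (fun ω => f (Y ω)) ⁻¹' {f t} = Y ⁻¹' {t} := by
          ext ω; simp [hf.eq_iff]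
        rw [this]

/-- data processing: coarsening the conditioning variable can only increase conditional entropy -/
lemma condEntropy_le_comp_right [IsFiniteMeasure μ] {X : Ω → S} {W : Ω → T}
    (hX : MPre X) (hW : MPre W) (f : T → T') :
    condEntropy μ X W ≤ condEntropy μ X (fun ω => f (W ω)) := by
  classical
  rw [condEntropy, condEntropy, neg_le_neg_iff]
  refine Finset.sum_le_sum fun s _ => ?_
  rw [← Finset.sum_fiberwise (Finset.univ : Finset T) f
    (fun t => (μ (X ⁻¹' {s} ∩ W ⁻¹' {t})).toReal *
      Real.log ((μ (X ⁻¹' {s} ∩ W ⁻¹' {t})).toReal / (μ (W ⁻¹' {t})).toReal))]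
  refine Finset.sum_le_sum fun t' _ => ?_
  have hnum := toReal_meas_fiber (μ := μ) hW (hX s) f t'
  have hden : (μ ((fun ω => f (W ω)) ⁻¹' {t'})).toReal
      = ∑ t ∈ Finset.univ.filter (fun t => f t = t'), (μ (W ⁻¹' {t})).toReal := by
    have h := toReal_meas_fiber (μ := μ) hW MeasurableSet.univ f t'
    simpa using h
  rw [hnum, hden]
  exact sum_log_sum _ _ _ (fun t _ => ENNReal.toReal_nonneg)
    (fun t _ => ENNReal.toReal_mono (measure_ne_top μ _) (measure_mono Set.inter_subset_right))

/-- chain rule: `H((A,B) | C) = H(A | C) + H(B | (A,C))` -/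
lemma condEntropy_pair_chain {α β γ : Type*} [Fintype α] [Fintype β] [Fintype γ]
    [IsFiniteMeasure μ] {A : Ω → α} {B : Ω → β} {C : Ω → γ}
    (hA : MPre A) (hB : MPre B) (hC : MPre C) :
    condEntropy μ (fun ω => (A ω, B ω)) C =
      condEntropy μ A C + condEntropy μ B (fun ω => (A ω, C ω)) := by
  classical
  -- notation
  set Pabc : α → β → γ → ℝ :=
    fun a b c => (μ (A ⁻¹' {a} ∩ B ⁻¹' {b} ∩ C ⁻¹' {c})).toReal with hPabc
  set Pac : α → γ → ℝ := fun a c => (μ (A ⁻¹' {a} ∩ C ⁻¹' {c})).toReal with hPac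
  set Pc : γ → ℝ := fun c => (μ (C ⁻¹' {c})).toReal with hPc
  have hsum : ∀ a c, Pac a c = ∑ b : β, Pabc a b c := by
    intro a c
    have h := toReal_meas_partition (μ := μ) hB ((hA a).inter (hC c))
    simp only [hPac, hPabc]
    rw [h]
    refine Finset.sum_congr rfl fun b _ => ?_
    have : A ⁻¹' {a} ∩ C ⁻¹' {c} ∩ B ⁻¹' {b} = A ⁻¹' {a} ∩ B ⁻¹' {b} ∩ C ⁻¹' {c} := by
      ext ω; simp only [Set.mem_inter_iff]; tauto
    rw [this]
  have hle1 : ∀ a b c, Pabc a b c ≤ Pac a c := fun a b c =>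
    ENNReal.toReal_mono (measure_ne_top μ _)
      (measure_mono (by intro ω hω; exact ⟨hω.1.1, hω.2⟩))
  have hle2 : ∀ a c, Pac a c ≤ Pc c := fun a c =>
    ENNReal.toReal_mono (measure_ne_top μ _) (measure_mono Set.inter_subset_right)
  have h0 : ∀ a b c, 0 ≤ Pabc a b c := fun a b c => ENNReal.toReal_nonneg
  -- rewrite LHS
  have hL : condEntropy μ (fun ω => (A ω, B ω)) C
      = -∑ a : α, ∑ c : γ, ∑ b : β, Pabc a b c * Real.log (Pabc a b c / Pc c) := by
    rw [condEntropy, Fintype.sum_prod_type, neg_inj]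
    refine Finset.sum_congr rfl fun a _ => ?_
    rw [Finset.sum_comm]
    refine Finset.sum_congr rfl fun c _ => Finset.sum_congr rfl fun b _ => ?_
    rw [pair_preimage]
  -- rewrite first RHS term
  have hR1 : condEntropy μ A C = -∑ a : α, ∑ c : γ, Pac a c * Real.log (Pac a c / Pc c) := rfl
  -- rewrite second RHS term
  have hsetBAC : ∀ a b c, B ⁻¹' {b} ∩ (A ⁻¹' {a} ∩ C ⁻¹' {c})
      = A ⁻¹' {a} ∩ B ⁻¹' {b} ∩ C ⁻¹' {c} := by
    intro a b c; ext ω; simp only [Set.mem_inter_iff]; tauto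
  have hR2 : condEntropy μ B (fun ω => (A ω, C ω))
      = -∑ a : α, ∑ c : γ, ∑ b : β, Pabc a b c * Real.log (Pabc a b c / Pac a c) := by
    rw [condEntropy, neg_inj]
    calc ∑ b : β, ∑ p : α × γ,
          (μ (B ⁻¹' {b} ∩ (fun ω => (A ω, C ω)) ⁻¹' {p})).toReal *
            Real.log ((μ (B ⁻¹' {b} ∩ (fun ω => (A ω, C ω)) ⁻¹' {p})).toReal /
              (μ ((fun ω => (A ω, C ω)) ⁻¹' {p})).toReal)
        = ∑ b : β, ∑ a : α, ∑ c : γ, Pabc a b c * Real.log (Pabc a b c / Pac a c) := by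
          refine Finset.sum_congr rfl fun b _ => ?_
          rw [Fintype.sum_prod_type]
          refine Finset.sum_congr rfl fun a _ => Finset.sum_congr rfl fun c _ => ?_
          rw [pair_preimage, hsetBAC]
      _ = ∑ a : α, ∑ c : γ, ∑ b : β, Pabc a b c * Real.log (Pabc a b c / Pac a c) := by
          rw [Finset.sum_comm]
          exact Finset.sum_congr rfl fun a _ => Finset.sum_comm
  have main : ∀ a c, ∑ b : β, Pabc a b c * Real.log (Pabc a b c / Pc c)
      = Pac a c * Real.log (Pac a c / Pc c)
        + ∑ b : β, Pabc a b c * Real.log (Pabc a b c / Pac a c) := by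
    intro a c
    have hterm : ∀ b, Pabc a b c * Real.log (Pabc a b c / Pc c)
        = Pabc a b c * Real.log (Pabc a b c / Pac a c)
          + Pabc a b c * Real.log (Pac a c / Pc c) := by
      intro b
      rcases (h0 a b c).eq_or_lt with hz | hpos
      · simp [← hz]
      · have h1 : 0 < Pac a c := lt_of_lt_of_le hpos (hle1 a b c)
        have h2 : 0 < Pc c := lt_of_lt_of_le h1 (hle2 a c)
        rw [Real.log_div hpos.ne' h2.ne', Real.log_div hpos.ne' h1.ne',
          Real.log_div h1.ne' h2.ne']
        ring
    rw [Finset.sum_congr rfl (fun b _ => hterm b), Finset.sum_add_distrib,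
      ← Finset.sum_mul, ← hsum a c]
    ring
  rw [hL, hR1, hR2, ← neg_add, neg_inj, ← Finset.sum_add_distrib]
  refine Finset.sum_congr rfl fun a _ => ?_
  rw [← Finset.sum_add_distrib]
  exact Finset.sum_congr rfl fun c _ => main a c

lemma condEntropy_zero_squeeze [IsFiniteMeasure μ] {X : Ω → S} {Y : Ω → T}
    (h : condEntropy μ X Y ≤ 0) : condEntropy μ X Y = 0 :=
  le_antisymm h (condEntropy_nonneg X Y)

/-- `H(A|C) + H(B|(A,C)) = H(B|C) + H(A|(B,C))` -/
lemma condEntropy_exchange {α β γ : Type*} [Fintype α] [Fintype β] [Fintype γ]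
    [IsFiniteMeasure μ] {A : Ω → α} {B : Ω → β} {C : Ω → γ}
    (hA : MPre A) (hB : MPre B) (hC : MPre C) :
    condEntropy μ A C + condEntropy μ B (fun ω => (A ω, C ω))
      = condEntropy μ B C + condEntropy μ A (fun ω => (B ω, C ω)) := by
  have h1 := condEntropy_pair_chain (μ := μ) hA hB hC
  have h2 := condEntropy_pair_chain (μ := μ) hB hA hC
  have h3 : condEntropy μ (fun ω => (A ω, B ω)) C
      = condEntropy μ (fun ω => (B ω, A ω)) C := by
    have e : (fun ω => (A ω, B ω)) = (fun ω => Prod.swap (B ω, A ω)) := rfl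
    rw [e, condEntropy_comp_left C Prod.swap_injective]
  linarith

/-- split of a history tuple into initial part and last coordinate -/
def sp {S : Type*} (n : ℕ) : (Fin (n + 1) → S) → (Fin n → S) × S :=
  fun v => (fun j => v j.castSucc, v (Fin.last n))

lemma sp_injective {S : Type*} (n : ℕ) : Function.Injective (sp (S := S) n) := by
  intro v w h
  have h1 := congrArg Prod.fst h
  have h2 := congrArg Prod.snd h
  funext j
  refine Fin.lastCases ?_ ?_ j
  · exact h2
  · exact fun i => congrFun h1 i

lemma sp_bar {S : Type*} (X : ℕ → Ω → S) (n : ℕ) :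
    (fun ω => sp n (bar X (n + 1) ω)) = fun ω => (bar X n ω, X (n + 1) ω) := rfl

lemma mpre_bar {S : Type*} {X : ℕ → Ω → S} (hX : ∀ i, MPre (X i)) (n : ℕ) :
    MPre (bar X n) := by
  intro v
  have h : (bar X n) ⁻¹' {v} = ⋂ j : Fin n, (X (j.1 + 1)) ⁻¹' {v j} := by
    ext ω
    simp [bar, funext_iff]
  rw [h]
  exact MeasurableSet.iInter fun j => hX _ _

end IURAux

open IURAux

/-- Under hypotheses (a) `H(Z₁) = 0`, (b) `H(Z̄_i | X̄_{i−1}, Ȳ_{i−1}) = 0`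
for `1 ≤ i ≤ g`, and (c) `H(Ȳ_{i−2} | Z̄_{i−1}, X̄_{i−1}) = H(Ȳ_{i−2} | Z̄_{i−1}, X̄_{i−2})`
for `2 ≤ i ≤ g`, one has
`Σ_{i=1}^g H(Z_i | X̄_{i−1}, Z̄_{i−1}) ≤ Σ_{i=1}^g H(Y_i | X̄_i, Ȳ_{i−1})`;
consequently, when the denominator is positive, the information utilization ratio
lies in `[0, 1]`. -/
theorem iur_well_defined {Ω S T U : Type*} [MeasurableSpace Ω]
    [Fintype S] [Fintype T] [Fintype U]
    [MeasurableSpace S] [MeasurableSingletonClass S]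
    [MeasurableSpace T] [MeasurableSingletonClass T]
    [MeasurableSpace U] [MeasurableSingletonClass U]
    (μ : Measure Ω) [IsProbabilityMeasure μ] (g : ℕ) (hg : 1 ≤ g)
    (X : ℕ → Ω → S) (Y : ℕ → Ω → T) (Z : ℕ → Ω → U)
    (hX : ∀ i, Measurable (X i)) (hY : ∀ i, Measurable (Y i)) (hZ : ∀ i, Measurable (Z i))
    (ha : shannonEntropy μ (Z 1) = 0)
    (hb : ∀ i, 1 ≤ i → i ≤ g →
      condEntropy μ (bar Z i) (fun ω => (bar X (i - 1) ω, bar Y (i - 1) ω)) = 0)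
    (hc : ∀ i, 2 ≤ i → i ≤ g →
      condEntropy μ (bar Y (i - 2)) (fun ω => (bar Z (i - 1) ω, bar X (i - 1) ω)) =
        condEntropy μ (bar Y (i - 2)) (fun ω => (bar Z (i - 1) ω, bar X (i - 2) ω))) :
    (∑ i ∈ Finset.Icc 1 g,
        condEntropy μ (Z i) (fun ω => (bar X (i - 1) ω, bar Z (i - 1) ω)))
      ≤ ∑ i ∈ Finset.Icc 1 g,
          condEntropy μ (Y i) (fun ω => (bar X i ω, bar Y (i - 1) ω)) ∧
    (0 < ∑ i ∈ Finset.Icc 1 g,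
          condEntropy μ (Y i) (fun ω => (bar X i ω, bar Y (i - 1) ω)) →
      0 ≤ (∑ i ∈ Finset.Icc 1 g,
              condEntropy μ (Z i) (fun ω => (bar X (i - 1) ω, bar Z (i - 1) ω))) /
            (∑ i ∈ Finset.Icc 1 g,
              condEntropy μ (Y i) (fun ω => (bar X i ω, bar Y (i - 1) ω))) ∧
        (∑ i ∈ Finset.Icc 1 g,
              condEntropy μ (Z i) (fun ω => (bar X (i - 1) ω, bar Z (i - 1) ω))) /
            (∑ i ∈ Finset.Icc 1 g,
              condEntropy μ (Y i) (fun ω => (bar X i ω, bar Y (i - 1) ω))) ≤ 1) := by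
  classical
  have hXp : ∀ i, MPre (X i) := fun i s => hX i (measurableSet_singleton s)
  have hYp : ∀ i, MPre (Y i) := fun i s => hY i (measurableSet_singleton s)
  have hZp : ∀ i, MPre (Z i) := fun i s => hZ i (measurableSet_singleton s)
  have hbX : ∀ n, MPre (bar X n) := mpre_bar hXp
  have hbY : ∀ n, MPre (bar Y n) := mpre_bar hYp
  have hbZ : ∀ n, MPre (bar Z n) := mpre_bar hZp
  have Cp : ∀ n, MPre (fun ω => (bar X n ω, bar Z n ω)) :=
    fun n => (hbX n).pair (hbZ n)
  -- `Z̄_{n+1}` has zero entropy given `(Ȳ_n, (X̄_n, Z̄_n))`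
  have hbzero : ∀ n, n + 1 ≤ g →
      condEntropy μ (bar Z (n + 1))
        (fun ω => (bar Y n ω, (bar X n ω, bar Z n ω))) = 0 := by
    intro n hn
    apply condEntropy_zero_squeeze
    have hle := condEntropy_le_comp_right (μ := μ) (hbZ (n + 1)) ((hbY n).pair (Cp n))
      (f := fun p : (Fin n → T) × ((Fin n → S) × (Fin n → U)) => (p.2.1, p.1))
    have e : (fun ω => ((fun p : (Fin n → T) × ((Fin n → S) × (Fin n → U)) => (p.2.1, p.1))
          ((bar Y n ω, (bar X n ω, bar Z n ω)))))
        = (fun ω => (bar X n ω, bar Y n ω)) := rfl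
    rw [e] at hle
    exact le_of_le_of_eq hle (hb (n + 1) (by omega) hn)
  -- Claim 1 : `H(Z_{n+1} | X̄_n, Z̄_n) = H(Z̄_{n+1} | X̄_n, Z̄_n)`
  have claim1 : ∀ n, condEntropy μ (bar Z (n + 1)) (fun ω => (bar X n ω, bar Z n ω))
      = condEntropy μ (Z (n + 1)) (fun ω => (bar X n ω, bar Z n ω)) := by
    intro n
    have e1 : condEntropy μ (bar Z (n + 1)) (fun ω => (bar X n ω, bar Z n ω))
        = condEntropy μ (fun ω => (bar Z n ω, Z (n + 1) ω))
            (fun ω => (bar X n ω, bar Z n ω)) := by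
      rw [← sp_bar Z n]
      exact (condEntropy_comp_left _ (sp_injective n)).symm
    rw [e1, condEntropy_pair_chain (hbZ n) (hZp (n + 1)) (Cp n),
      condEntropy_eq_zero_of_fun (X := bar Z n) (Y := fun ω => (bar X n ω, bar Z n ω))
        (f := Prod.snd) (fun ω => rfl), zero_add]
    have hinj : Function.Injective (fun c : (Fin n → S) × (Fin n → U) => (c.2, c)) :=
      fun a b h => congrArg Prod.snd h
    have e2 : condEntropy μ (Z (n + 1)) (fun ω => (bar Z n ω, (bar X n ω, bar Z n ω)))
        = condEntropy μ (Z (n + 1)) (fun ω => (bar X n ω, bar Z n ω)) :=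
      condEntropy_comp_right (μ := μ) (Z (n + 1))
        (Y := fun ω => (bar X n ω, bar Z n ω))
        (f := fun c : (Fin n → S) × (Fin n → U) => (c.2, c)) hinj
    exact e2
  -- Claim 2 : `H(Z̄_{n+1} | X̄_n, Z̄_n) ≤ H(Ȳ_n | X̄_n, Z̄_n)`
  have claim2 : ∀ n, n + 1 ≤ g →
      condEntropy μ (bar Z (n + 1)) (fun ω => (bar X n ω, bar Z n ω))
        ≤ condEntropy μ (bar Y n) (fun ω => (bar X n ω, bar Z n ω)) := by
    intro n hn
    have hex := condEntropy_exchange (μ := μ) (hbY n) (hbZ (n + 1)) (Cp n)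
    have h0 := hbzero n hn
    have h1 := condEntropy_nonneg (μ := μ) (bar Y n)
      (fun ω => (bar Z (n + 1) ω, (bar X n ω, bar Z n ω)))
    linarith
  -- Claim 3 : the key telescoping step
  have claim3 : ∀ n, n + 2 ≤ g →
      condEntropy μ (Z (n + 1)) (fun ω => (bar X n ω, bar Z n ω))
        + condEntropy μ (bar Y (n + 1)) (fun ω => (bar X (n + 1) ω, bar Z (n + 1) ω))
      ≤ condEntropy μ (Y (n + 1)) (fun ω => (bar X (n + 1) ω, bar Y n ω))
        + condEntropy μ (bar Y n) (fun ω => (bar X n ω, bar Z n ω)) := by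
    intro n hn
    have e1 : condEntropy μ (bar Y (n + 1)) (fun ω => (bar X (n + 1) ω, bar Z (n + 1) ω))
        = condEntropy μ (bar Y n) (fun ω => (bar X (n + 1) ω, bar Z (n + 1) ω))
          + condEntropy μ (Y (n + 1))
              (fun ω => (bar Y n ω, (bar X (n + 1) ω, bar Z (n + 1) ω))) := by
      have e : condEntropy μ (bar Y (n + 1)) (fun ω => (bar X (n + 1) ω, bar Z (n + 1) ω))
          = condEntropy μ (fun ω => (bar Y n ω, Y (n + 1) ω))
              (fun ω => (bar X (n + 1) ω, bar Z (n + 1) ω)) := by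
        rw [← sp_bar Y n]
        exact (condEntropy_comp_left _ (sp_injective n)).symm
      rw [e, condEntropy_pair_chain (hbY n) (hYp (n + 1)) (Cp (n + 1))]
    have e2 : condEntropy μ (Y (n + 1))
          (fun ω => (bar Y n ω, (bar X (n + 1) ω, bar Z (n + 1) ω)))
        ≤ condEntropy μ (Y (n + 1)) (fun ω => (bar X (n + 1) ω, bar Y n ω)) := by
      have hle := condEntropy_le_comp_right (μ := μ) (hYp (n + 1))
        ((hbY n).pair (Cp (n + 1)))
        (f := fun p : (Fin n → T) × ((Fin (n + 1) → S) × (Fin (n + 1) → U)) => (p.2.1, p.1))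
      exact hle
    have e3 : condEntropy μ (bar Y n) (fun ω => (bar X (n + 1) ω, bar Z (n + 1) ω))
        = condEntropy μ (bar Y n) (fun ω => (bar Z (n + 1) ω, (bar X n ω, bar Z n ω))) := by
      have s1 : condEntropy μ (bar Y n) (fun ω => (bar X (n + 1) ω, bar Z (n + 1) ω))
          = condEntropy μ (bar Y n) (fun ω => (bar Z (n + 1) ω, bar X (n + 1) ω)) := by
        have hsw : Function.Injective
            (fun p : (Fin (n + 1) → U) × (Fin (n + 1) → S) => (p.2, p.1)) :=
          fun a b h => Prod.ext (congrArg Prod.snd h) (congrArg Prod.fst h)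
        exact (condEntropy_comp_right (μ := μ) (bar Y n)
          (Y := fun ω => (bar Z (n + 1) ω, bar X (n + 1) ω))
          (f := fun p : (Fin (n + 1) → U) × (Fin (n + 1) → S) => (p.2, p.1)) hsw)
      have s2 := hc (n + 2) (by omega) hn
      rw [(by omega : n + 2 - 2 = n), (by omega : n + 2 - 1 = n + 1)] at s2
      have s3 : condEntropy μ (bar Y n) (fun ω => (bar Z (n + 1) ω, bar X n ω))
          = condEntropy μ (bar Y n)
              (fun ω => (bar Z (n + 1) ω, (bar X n ω, bar Z n ω))) := by
        have hinj : Function.Injective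
            (fun p : (Fin (n + 1) → U) × (Fin n → S) =>
              (p.1, (p.2, fun j : Fin n => p.1 j.castSucc))) := by
          intro p q h
          have h1 := congrArg Prod.fst h
          have h2 := congrArg (fun r : (Fin (n + 1) → U) × ((Fin n → S) × (Fin n → U)) =>
            r.2.1) h
          exact Prod.ext h1 h2
        exact (condEntropy_comp_right (μ := μ) (bar Y n)
          (Y := fun ω => (bar Z (n + 1) ω, bar X n ω))
          (f := fun p : (Fin (n + 1) → U) × (Fin n → S) =>
            (p.1, (p.2, fun j : Fin n => p.1 j.castSucc))) hinj).symm
      rw [s1, s2, s3]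
    have hex := condEntropy_exchange (μ := μ) (hbZ (n + 1)) (hbY n) (Cp n)
    have h0 := hbzero n (by omega)
    have hc1 := claim1 n
    linarith
  -- `D 1 = 0`
  have hD1 : condEntropy μ (bar Y 0) (fun ω => (bar X 0 ω, bar Z 0 ω)) = 0 :=
    condEntropy_eq_zero_of_fun (f := fun _ => (fun j : Fin 0 => j.elim0))
      (fun ω => funext fun j => j.elim0)
  -- the telescoping induction
  have K : ∀ n, n + 1 ≤ g →
      (∑ i ∈ Finset.Icc 1 n,
          condEntropy μ (Z i) (fun ω => (bar X (i - 1) ω, bar Z (i - 1) ω)))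
        + condEntropy μ (bar Y n) (fun ω => (bar X n ω, bar Z n ω))
      ≤ ∑ i ∈ Finset.Icc 1 n,
          condEntropy μ (Y i) (fun ω => (bar X i ω, bar Y (i - 1) ω)) := by
    intro n
    induction n with
    | zero =>
      intro _
      rw [Finset.Icc_eq_empty (by omega)]
      simp [hD1]
    | succ n ih =>
      intro hn2
      have ihn := ih (by omega)
      rw [Finset.sum_Icc_succ_top (by omega : (1 : ℕ) ≤ n + 1),
        Finset.sum_Icc_succ_top (by omega : (1 : ℕ) ≤ n + 1)]
      show (∑ i ∈ Finset.Icc 1 n,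
            condEntropy μ (Z i) (fun ω => (bar X (i - 1) ω, bar Z (i - 1) ω)))
          + condEntropy μ (Z (n + 1)) (fun ω => (bar X n ω, bar Z n ω))
          + condEntropy μ (bar Y (n + 1)) (fun ω => (bar X (n + 1) ω, bar Z (n + 1) ω))
        ≤ (∑ i ∈ Finset.Icc 1 n,
            condEntropy μ (Y i) (fun ω => (bar X i ω, bar Y (i - 1) ω)))
          + condEntropy μ (Y (n + 1)) (fun ω => (bar X (n + 1) ω, bar Y n ω))
      have h3 := claim3 n hn2
      linarith
  -- main inequality
  have main : (∑ i ∈ Finset.Icc 1 g,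
        condEntropy μ (Z i) (fun ω => (bar X (i - 1) ω, bar Z (i - 1) ω)))
      ≤ ∑ i ∈ Finset.Icc 1 g,
          condEntropy μ (Y i) (fun ω => (bar X i ω, bar Y (i - 1) ω)) := by
    obtain ⟨n, rfl⟩ : ∃ n, g = n + 1 := ⟨g - 1, by omega⟩
    have hK := K n le_rfl
    have hL := (claim1 n).symm.trans_le (claim2 n le_rfl)
    have hR := condEntropy_nonneg (μ := μ) (Y (n + 1))
      (fun ω => (bar X (n + 1) ω, bar Y n ω))
    rw [Finset.sum_Icc_succ_top (by omega : (1 : ℕ) ≤ n + 1),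
      Finset.sum_Icc_succ_top (by omega : (1 : ℕ) ≤ n + 1)]
    show (∑ i ∈ Finset.Icc 1 n,
          condEntropy μ (Z i) (fun ω => (bar X (i - 1) ω, bar Z (i - 1) ω)))
        + condEntropy μ (Z (n + 1)) (fun ω => (bar X n ω, bar Z n ω))
      ≤ (∑ i ∈ Finset.Icc 1 n,
          condEntropy μ (Y i) (fun ω => (bar X i ω, bar Y (i - 1) ω)))
        + condEntropy μ (Y (n + 1)) (fun ω => (bar X (n + 1) ω, bar Y n ω))
    linarith
  refine ⟨main, fun hpos => ⟨?_, ?_⟩⟩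
  · refine div_nonneg ?_ hpos.le
    exact Finset.sum_nonneg fun i _ => condEntropy_nonneg _ _
  · exact (div_le_one hpos).mpr main
end

section
/- Let g ≥ 1 and let X₁,…,X_g, Y₁,…,Y_g, Z₁,…,Z_g be random variables on a common probability space, each taking values in a finite set. Write X̄_i = (X₁,…,X_i), Ȳ_i = (Y₁,…,Y_i), Z̄_i = (Z₁,…,Z_i), with X̄₀, Ȳ₀, Z̄₀ constant (empty). Assume: (a) H(Z₁) = 0; (b) for every 1 ≤ i ≤ g, H(Z̄_i | X̄_{i−1}, Ȳ_{i−1}) = 0; (c) for every 2 ≤ i ≤ g, H(Ȳ_{i−2} | Z̄_{i−1}, X̄_{i−1}) = H(Ȳ_{i−2} | Z̄_{i−1}, X̄_{i−2}). Then the exact identity holds: Σ_{i=1}^g H(Z_i | X̄_{i−1}, Z̄_{i−1}) = Σ_{i=1}^g H(Y_i | X̄_i, Ȳ_{i−1}) − H(Y_g | X̄_g, Ȳ_{g−1}) − H(Ȳ_{g−1} | Z̄_g, X̄_{g−1}). -/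
open MeasureTheory
open scoped ENNReal

/-!
Conditional entropy is a difference of joint entropies, `H(A | B) = H(A, B) - H(B)`, which gives
the chain rule and the exchange rule `H(B | C) + H(A | B, C) = H(A | C) + H(B | A, C)`.
Since `Z̄_{k+1}` is determined by `(X̄_k, Ȳ_k)`, hence also by `(Ȳ_k, X̄_{k+1})`, the exchange rule
for `Ȳ` and `Z̄` conditioned on `X̄_{k+1}`, applied at lengths `k` and `k + 1`, gives
`H(Z_{k+2} | X̄_{k+1}, Z̄_{k+1}) = H(Y_{k+1} | X̄_{k+1}, Ȳ_k) + W_k - W_{k+1}` with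
`W_k = H(Ȳ_k | Z̄_{k+1}, X̄_k)`, once hypothesis (c) has replaced `X̄_{k+1}` by `X̄_k` in `W_k`.
Summing, the `W_k` telescope, and the first round contributes `H(Z₁) = 0 = -W_0`.
-/

open Function Finset Real

lemma mul_log_div_nonpos {p q : ℝ} (hp : 0 ≤ p) (hpq : p ≤ q) : p * log (p / q) ≤ 0 := by
  rcases hp.eq_or_lt with rfl | hp
  · simp
  exact mul_nonpos_of_nonneg_of_nonpos hp.le
    (log_nonpos (div_nonneg hp.le (hp.trans_le hpq).le) ((div_le_one (hp.trans_le hpq)).2 hpq))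

lemma mul_log_div_eq_zero_iff {p q : ℝ} (hp : 0 ≤ p) (hpq : p ≤ q) :
    p * log (p / q) = 0 ↔ p = 0 ∨ p = q := by
  rcases hp.eq_or_lt with rfl | hp
  · simp
  have hq : 0 < q := hp.trans_le hpq
  have hpq' : 0 < p / q := div_pos hp hq
  rw [mul_eq_zero, log_eq_zero, div_eq_one_iff_eq hq.ne']
  constructor
  · rintro (h | h | h | h)
    exacts [Or.inl h, absurd h hpq'.ne', Or.inr h, absurd h (by linarith)]
  · rintro (h | h)
    exacts [Or.inl h, Or.inr (Or.inr (Or.inl h))]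

lemma mul_log_div_eq_sub {p q : ℝ} (hpq : p ≠ 0 → q ≠ 0) :
    p * log (p / q) = p * log p - p * log q := by
  rcases eq_or_ne p 0 with rfl | hp
  · simp
  rw [log_div hp (hpq hp), mul_sub]

lemma preimage_pair_singleton {Ω S T : Type*} (A : Ω → S) (B : Ω → T) (s : S) (t : T) :
    (fun ω => (A ω, B ω)) ⁻¹' {(s, t)} = A ⁻¹' {s} ∩ B ⁻¹' {t} := by
  rw [← Set.singleton_prod_singleton, Set.mk_preimage_prod]

section Entropy

variable {Ω S T U V : Type*} [MeasurableSpace Ω] {μ : Measure Ω}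
  [Fintype S] [Fintype T] [Fintype U] [Fintype V]

lemma shannonEntropy_eq_sum_measureReal (A : Ω → S) :
    shannonEntropy μ A = -∑ s, μ.real (A ⁻¹' {s}) * log (μ.real (A ⁻¹' {s})) := rfl

lemma condEntropy_eq_sum_measureReal (A : Ω → S) (B : Ω → T) :
    condEntropy μ A B = -∑ s, ∑ t, μ.real (A ⁻¹' {s} ∩ B ⁻¹' {t}) *
      log (μ.real (A ⁻¹' {s} ∩ B ⁻¹' {t}) / μ.real (B ⁻¹' {t})) := rfl

lemma shannonEntropy_comp_of_injective {f : S → T} (hf : Injective f) (A : Ω → S) :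
    shannonEntropy μ (f ∘ A) = shannonEntropy μ A := by
  simp only [shannonEntropy_eq_sum_measureReal, neg_inj]
  refine (Fintype.sum_of_injective f hf _ _ (fun t ht => ?_) fun s => ?_).symm
  · have : (f ∘ A) ⁻¹' {t} = ∅ :=
      Set.eq_empty_of_forall_notMem fun ω hω => ht ⟨A ω, hω⟩
    simp [this]
  · have : (f ∘ A) ⁻¹' {f s} = A ⁻¹' {s} := by ext; simp [hf.eq_iff]
    rw [this]

lemma condEntropy_of_subsingleton_left [IsFiniteMeasure μ] [Subsingleton S] (A : Ω → S)
    (B : Ω → T) : condEntropy μ A B = 0 := by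
  have h : ∀ s, A ⁻¹' {s} = Set.univ := fun s =>
    Set.eq_univ_of_forall fun ω => Subsingleton.elim (A ω) s
  simp only [condEntropy_eq_sum_measureReal, h, Set.univ_inter]
  refine neg_eq_zero.2 (sum_eq_zero fun s _ => sum_eq_zero fun t _ => ?_)
  rcases eq_or_ne (μ.real (B ⁻¹' {t})) 0 with h0 | h0 <;> simp [h0]

lemma condEntropy_of_subsingleton_right [IsProbabilityMeasure μ] [Subsingleton T] [Nonempty T]
    (A : Ω → S) (B : Ω → T) : condEntropy μ A B = shannonEntropy μ A := by
  have h : ∀ t, B ⁻¹' {t} = Set.univ := fun t =>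
    Set.eq_univ_of_forall fun ω => Subsingleton.elim (B ω) t
  simp only [condEntropy_eq_sum_measureReal, shannonEntropy_eq_sum_measureReal, h,
    Set.inter_univ, probReal_univ, div_one, Fintype.sum_subsingleton _ (Classical.arbitrary T)]

section Measurable

variable [MeasurableSpace S] [MeasurableSingletonClass S]
  [MeasurableSpace T] [MeasurableSingletonClass T]

lemma sum_measureReal_preimage_singleton_inter [IsFiniteMeasure μ] {A : Ω → S}
    (hA : Measurable A) (E : Set Ω) : ∑ s, μ.real (A ⁻¹' {s} ∩ E) = μ.real E := by
  have h := sum_measure_preimage_singleton (μ := μ.restrict E) univ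
    fun s _ => hA (measurableSet_singleton s)
  simp only [Measure.restrict_apply (hA (measurableSet_singleton _)), coe_univ,
    Set.preimage_univ, Measure.restrict_apply_univ] at h
  simp only [measureReal_def, ← ENNReal.toReal_sum fun _ _ => measure_ne_top _ _, h]

lemma condEntropy_eq_sub [IsFiniteMeasure μ] {A : Ω → S} (hA : Measurable A) (B : Ω → U) :
    condEntropy μ A B = shannonEntropy μ (fun ω => (A ω, B ω)) - shannonEntropy μ B := by
  have hsplit : ∀ s u, μ.real (A ⁻¹' {s} ∩ B ⁻¹' {u}) *
      log (μ.real (A ⁻¹' {s} ∩ B ⁻¹' {u}) / μ.real (B ⁻¹' {u})) =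
        μ.real (A ⁻¹' {s} ∩ B ⁻¹' {u}) * log (μ.real (A ⁻¹' {s} ∩ B ⁻¹' {u})) -
          μ.real (A ⁻¹' {s} ∩ B ⁻¹' {u}) * log (μ.real (B ⁻¹' {u})) := fun s u =>
    mul_log_div_eq_sub fun hp hq => hp <| le_antisymm
      (hq ▸ measureReal_mono Set.inter_subset_right) measureReal_nonneg
  have hmarg : ∑ s, ∑ u, μ.real (A ⁻¹' {s} ∩ B ⁻¹' {u}) * log (μ.real (B ⁻¹' {u})) =
      ∑ u, μ.real (B ⁻¹' {u}) * log (μ.real (B ⁻¹' {u})) := by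
    rw [sum_comm]
    simp only [← sum_mul, sum_measureReal_preimage_singleton_inter hA]
  rw [condEntropy_eq_sum_measureReal, shannonEntropy_eq_sum_measureReal,
    shannonEntropy_eq_sum_measureReal, Fintype.sum_prod_type]
  simp only [preimage_pair_singleton, hsplit, sum_sub_distrib, hmarg]
  ring

lemma condEntropy_comp_of_injective [IsFiniteMeasure μ] {f : S → T} {g : U → V}
    (hf : Injective f) (hg : Injective g) {A : Ω → S} (hA : Measurable A) (B : Ω → U) :
    condEntropy μ (f ∘ A) (g ∘ B) = condEntropy μ A B := by
  rw [condEntropy_eq_sub hA, condEntropy_eq_sub ((Measurable.of_discrete (f := f)).comp hA),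
    shannonEntropy_comp_of_injective hg]
  exact congrArg (· - shannonEntropy μ B)
    (shannonEntropy_comp_of_injective (hf.prodMap hg) fun ω => (A ω, B ω))

lemma condEntropy_swap_right [IsFiniteMeasure μ] {A : Ω → S} (hA : Measurable A)
    (B : Ω → U) (C : Ω → V) :
    condEntropy μ A (fun ω => (B ω, C ω)) = condEntropy μ A (fun ω => (C ω, B ω)) :=
  condEntropy_comp_of_injective (f := id) injective_id Prod.swap_injective hA
    (fun ω => (C ω, B ω))

lemma condEntropy_pair_left [IsFiniteMeasure μ] {A : Ω → S} {B : Ω → T} (hA : Measurable A)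
    (hB : Measurable B) (C : Ω → U) :
    condEntropy μ (fun ω => (A ω, B ω)) C =
      condEntropy μ B C + condEntropy μ A (fun ω => (B ω, C ω)) := by
  have hassoc : shannonEntropy μ (fun ω => (A ω, (B ω, C ω))) =
      shannonEntropy μ (fun ω => ((A ω, B ω), C ω)) :=
    shannonEntropy_comp_of_injective (Equiv.prodAssoc S T U).injective
      fun ω => ((A ω, B ω), C ω)
  rw [condEntropy_eq_sub (hA.prodMk hB), condEntropy_eq_sub hB, condEntropy_eq_sub hA, hassoc]
  ring

lemma condEntropy_add_condEntropy_comm [IsFiniteMeasure μ] {A : Ω → S} {B : Ω → T}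
    (hA : Measurable A) (hB : Measurable B) (C : Ω → U) :
    condEntropy μ B C + condEntropy μ A (fun ω => (B ω, C ω)) =
      condEntropy μ A C + condEntropy μ B (fun ω => (A ω, C ω)) := by
  rw [← condEntropy_pair_left hA hB, ← condEntropy_pair_left hB hA]
  exact condEntropy_comp_of_injective (f := Prod.swap) (g := id) Prod.swap_injective injective_id
    (hB.prodMk hA) C

lemma condEntropy_eq_zero_iff [IsFiniteMeasure μ] {A : Ω → S} (hA : Measurable A)
    (B : Ω → U) : condEntropy μ A B = 0 ↔
      ∀ s u, μ (A ⁻¹' {s} ∩ B ⁻¹' {u}) = 0 ∨ μ (B ⁻¹' {u} \ A ⁻¹' {s}) = 0 := by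
  have hle : ∀ s u, μ.real (A ⁻¹' {s} ∩ B ⁻¹' {u}) ≤ μ.real (B ⁻¹' {u}) := fun s u =>
    measureReal_mono Set.inter_subset_right
  have hnonneg : ∀ s u, 0 ≤ -(μ.real (A ⁻¹' {s} ∩ B ⁻¹' {u}) *
      log (μ.real (A ⁻¹' {s} ∩ B ⁻¹' {u}) / μ.real (B ⁻¹' {u}))) := fun s u =>
    neg_nonneg.2 (mul_log_div_nonpos measureReal_nonneg (hle s u))
  have hdiff : ∀ s u, μ.real (A ⁻¹' {s} ∩ B ⁻¹' {u}) = μ.real (B ⁻¹' {u}) ↔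
      μ (B ⁻¹' {u} \ A ⁻¹' {s}) = 0 := fun s u => by
    have h := measureReal_inter_add_sdiff (μ := μ) (s := B ⁻¹' {u}) (hA (measurableSet_singleton s))
    rw [Set.inter_comm, ← measureReal_eq_zero_iff]
    constructor <;> intro <;> linarith
  simp only [condEntropy_eq_sum_measureReal, neg_eq_zero, ← sum_neg_distrib,
    sum_eq_zero_iff_of_nonneg fun s _ => sum_nonneg fun u _ => hnonneg s u,
    sum_eq_zero_iff_of_nonneg fun u _ => hnonneg _ u, mem_univ, true_implies, neg_eq_zero,
    mul_log_div_eq_zero_iff measureReal_nonneg (hle _ _), hdiff,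
    measureReal_eq_zero_iff (measure_ne_top μ _)]

lemma condEntropy_eq_zero_of_comp [IsFiniteMeasure μ] {A : Ω → S} (hA : Measurable A)
    {C : Ω → V} (r : V → U) (h : condEntropy μ A (r ∘ C) = 0) : condEntropy μ A C = 0 := by
  rw [condEntropy_eq_zero_iff hA] at h ⊢
  intro s v
  have hsub : C ⁻¹' {v} ⊆ (r ∘ C) ⁻¹' {r v} := fun ω (hω : C ω = v) => congrArg r hω
  exact (h s (r v)).imp (measure_mono_null (Set.inter_subset_inter_right _ hsub))
    (measure_mono_null (Set.sdiff_subset_sdiff_left hsub))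

lemma condEntropy_eq_of_determined {S' T' : Type*} [Fintype S'] [Fintype T']
    [MeasurableSpace S'] [MeasurableSingletonClass S']
    [MeasurableSpace T'] [MeasurableSingletonClass T'] [IsFiniteMeasure μ]
    {A : Ω → U} {y : Ω → S} {Y : Ω → S'} {z : Ω → T} {Z : Ω → T'}
    (hy : Measurable y) (hY : Measurable Y) (hz : Measurable z) (hZ : Measurable Z)
    (hzZ : condEntropy μ (fun ω => (z ω, Z ω)) (fun ω => ((y ω, Y ω), A ω)) = 0)
    (hZ₀ : condEntropy μ Z (fun ω => (Y ω, A ω)) = 0) :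
    condEntropy μ z (fun ω => (A ω, Z ω)) =
      condEntropy μ y (fun ω => (A ω, Y ω)) + condEntropy μ Y (fun ω => (Z ω, A ω)) -
        condEntropy μ (fun ω => (y ω, Y ω)) (fun ω => ((z ω, Z ω), A ω)) := by
  have hz_chain := condEntropy_pair_left (μ := μ) hz hZ A
  have hy_chain := condEntropy_pair_left (μ := μ) hy hY A
  have hzZ_comm := condEntropy_add_condEntropy_comm (μ := μ) (hy.prodMk hY) (hz.prodMk hZ) A
  have hZ_comm := condEntropy_add_condEntropy_comm (μ := μ) hY hZ A
  rw [condEntropy_swap_right hz, condEntropy_swap_right hy]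
  linarith

end Measurable

end Entropy

lemma measurable_bar {Ω S : Type*} [MeasurableSpace Ω] [MeasurableSpace S] {X : ℕ → Ω → S}
    (hX : ∀ i, Measurable (X i)) (i : ℕ) : Measurable (bar X i) :=
  measurable_pi_lambda _ fun _ => hX _

lemma condEntropy_bar_succ_eq {Ω S T U : Type*} [MeasurableSpace Ω] {μ : Measure Ω}
    [IsFiniteMeasure μ] [Fintype S] [Fintype T] [Fintype U]
    [MeasurableSpace T] [MeasurableSingletonClass T]
    [MeasurableSpace U] [MeasurableSingletonClass U]
    {X : ℕ → Ω → S} {Y : ℕ → Ω → T} {Z : ℕ → Ω → U}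
    (hY : ∀ i, Measurable (Y i)) (hZ : ∀ i, Measurable (Z i)) (k : ℕ)
    (h₁ : condEntropy μ (bar Z (k + 1)) (fun ω => (bar X k ω, bar Y k ω)) = 0)
    (h₂ : condEntropy μ (bar Z (k + 2)) (fun ω => (bar X (k + 1) ω, bar Y (k + 1) ω)) = 0)
    (h₃ : condEntropy μ (bar Y k) (fun ω => (bar Z (k + 1) ω, bar X (k + 1) ω)) =
      condEntropy μ (bar Y k) (fun ω => (bar Z (k + 1) ω, bar X k ω))) :
    condEntropy μ (Z (k + 2)) (fun ω => (bar X (k + 1) ω, bar Z (k + 1) ω)) =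
      condEntropy μ (Y (k + 1)) (fun ω => (bar X (k + 1) ω, bar Y k ω)) +
        condEntropy μ (bar Y k) (fun ω => (bar Z (k + 1) ω, bar X k ω)) -
        condEntropy μ (bar Y (k + 1)) (fun ω => (bar Z (k + 2) ω, bar X (k + 1) ω)) := by
  -- `eY ∘ bar Y (k + 1)` is definitionally `fun ω => (Y (k + 1) ω, bar Y k ω)`; same for `eZ`.
  set eY := (Fin.snocEquiv fun _ : Fin (k + 1) => T).symm
  set eZ := (Fin.snocEquiv fun _ : Fin (k + 2) => U).symm
  rw [← h₃]
  refine (condEntropy_eq_of_determined (A := bar X (k + 1)) (hY (k + 1)) (measurable_bar hY k)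
    (hZ (k + 2)) (measurable_bar hZ (k + 1)) ?_ ?_).trans ?_
  · exact (condEntropy_comp_of_injective (f := eZ) (g := Prod.map eY id ∘ Prod.swap)
      eZ.injective ((eY.injective.prodMap injective_id).comp Prod.swap_injective)
      (measurable_bar hZ _) fun ω => (bar X (k + 1) ω, bar Y (k + 1) ω)).trans h₂
  · exact condEntropy_eq_zero_of_comp (measurable_bar hZ _) (fun p => (Fin.init p.2, p.1)) h₁
  · congr 1
    exact condEntropy_comp_of_injective (f := eY) (g := Prod.map eZ id) eY.injective
      (eZ.injective.prodMap injective_id) (measurable_bar hY _)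
      fun ω => (bar Z (k + 2) ω, bar X (k + 1) ω)

lemma sum_Icc_eq_of_telescoping {M : Type*} [AddCommGroup M] {L R W : ℕ → M} {n : ℕ}
    (h₀ : L 1 = -W 0) (h : ∀ k < n, L (k + 2) = R (k + 1) + W k - W (k + 1)) :
    ∑ i ∈ Icc 1 (n + 1), L i = ∑ i ∈ Icc 1 (n + 1), R i - R (n + 1) - W n := by
  induction n with
  | zero => simp [h₀]
  | succ n ih =>
    rw [sum_Icc_succ_top (by omega), ih fun k hk => h k (by omega), h n (by omega),
      sum_Icc_succ_top (b := n + 1) (by omega) R]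
    abel

theorem iur_exact_identity_general {Ω S T U : Type*} [MeasurableSpace Ω]
    [Fintype S] [Fintype T] [Fintype U]
    [MeasurableSpace T] [MeasurableSingletonClass T]
    [MeasurableSpace U] [MeasurableSingletonClass U]
    (μ : Measure Ω) [IsProbabilityMeasure μ] (g : ℕ) (hg : 1 ≤ g)
    (X : ℕ → Ω → S) (Y : ℕ → Ω → T) (Z : ℕ → Ω → U)
    (hY : ∀ i, Measurable (Y i)) (hZ : ∀ i, Measurable (Z i))
    (ha : shannonEntropy μ (Z 1) = 0)
    (hb : ∀ i, 1 ≤ i → i ≤ g →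
      condEntropy μ (bar Z i) (fun ω => (bar X (i - 1) ω, bar Y (i - 1) ω)) = 0)
    (hc : ∀ i, 2 ≤ i → i ≤ g →
      condEntropy μ (bar Y (i - 2)) (fun ω => (bar Z (i - 1) ω, bar X (i - 1) ω)) =
        condEntropy μ (bar Y (i - 2)) (fun ω => (bar Z (i - 1) ω, bar X (i - 2) ω))) :
    (∑ i ∈ Finset.Icc 1 g,
        condEntropy μ (Z i) (fun ω => (bar X (i - 1) ω, bar Z (i - 1) ω)))
      = (∑ i ∈ Finset.Icc 1 g,
          condEntropy μ (Y i) (fun ω => (bar X i ω, bar Y (i - 1) ω)))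
        - condEntropy μ (Y g) (fun ω => (bar X g ω, bar Y (g - 1) ω))
        - condEntropy μ (bar Y (g - 1)) (fun ω => (bar Z g ω, bar X (g - 1) ω)) := by
  obtain ⟨n, rfl⟩ : ∃ n, g = n + 1 := ⟨g - 1, by omega⟩
  have h₀ : condEntropy μ (Z 1) (fun ω => (bar X 0 ω, bar Z 0 ω)) =
      -condEntropy μ (bar Y 0) (fun ω => (bar Z 1 ω, bar X 0 ω)) := by
    rw [condEntropy_of_subsingleton_right, ha, condEntropy_of_subsingleton_left, neg_zero]
  exact sum_Icc_eq_of_telescoping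
    (W := fun k => condEntropy μ (bar Y k) (fun ω => (bar Z (k + 1) ω, bar X k ω))) h₀
    fun k hk => condEntropy_bar_succ_eq hY hZ k (hb (k + 1) (by omega) (by omega))
      (hb (k + 2) (by omega) (by omega)) (hc (k + 2) (by omega) (by omega))

/-- Under hypotheses (a) `H(Z₁) = 0`, (b) `H(Z̄_i | X̄_{i−1}, Ȳ_{i−1}) = 0`
for `1 ≤ i ≤ g`, and (c) `H(Ȳ_{i−2} | Z̄_{i−1}, X̄_{i−1}) = H(Ȳ_{i−2} | Z̄_{i−1}, X̄_{i−2})`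
for `2 ≤ i ≤ g`, the exact identity holds:
`Σ_{i=1}^g H(Z_i | X̄_{i−1}, Z̄_{i−1})
  = Σ_{i=1}^g H(Y_i | X̄_i, Ȳ_{i−1}) − H(Y_g | X̄_g, Ȳ_{g−1}) − H(Ȳ_{g−1} | Z̄_g, X̄_{g−1})`. -/
theorem iur_exact_identity {Ω S T U : Type*} [MeasurableSpace Ω]
    [Fintype S] [Fintype T] [Fintype U]
    [MeasurableSpace S] [MeasurableSingletonClass S]
    [MeasurableSpace T] [MeasurableSingletonClass T]
    [MeasurableSpace U] [MeasurableSingletonClass U]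
    (μ : Measure Ω) [IsProbabilityMeasure μ] (g : ℕ) (hg : 1 ≤ g)
    (X : ℕ → Ω → S) (Y : ℕ → Ω → T) (Z : ℕ → Ω → U)
    (hX : ∀ i, Measurable (X i)) (hY : ∀ i, Measurable (Y i)) (hZ : ∀ i, Measurable (Z i))
    (ha : shannonEntropy μ (Z 1) = 0)
    (hb : ∀ i, 1 ≤ i → i ≤ g →
      condEntropy μ (bar Z i) (fun ω => (bar X (i - 1) ω, bar Y (i - 1) ω)) = 0)
    (hc : ∀ i, 2 ≤ i → i ≤ g →
      condEntropy μ (bar Y (i - 2)) (fun ω => (bar Z (i - 1) ω, bar X (i - 1) ω)) =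
        condEntropy μ (bar Y (i - 2)) (fun ω => (bar Z (i - 1) ω, bar X (i - 2) ω))) :
    (∑ i ∈ Finset.Icc 1 g,
        condEntropy μ (Z i) (fun ω => (bar X (i - 1) ω, bar Z (i - 1) ω)))
      = (∑ i ∈ Finset.Icc 1 g,
          condEntropy μ (Y i) (fun ω => (bar X i ω, bar Y (i - 1) ω)))
        - condEntropy μ (Y g) (fun ω => (bar X g ω, bar Y (g - 1) ω))
        - condEntropy μ (bar Y (g - 1)) (fun ω => (bar Z g ω, bar X (g - 1) ω)) :=
  iur_exact_identity_general μ g hg X Y Z hY hZ ha hb hc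
end

section
/- Let η₁, η₂, …, η_n (n ≥ 2) be independent, identically distributed real-valued random variables whose common distribution is atomless. For 2 ≤ i ≤ n define the record indicator B_i = I(η_i < min(η₁, …, η_{i−1})). Then the random variables B₂, …, B_n are mutually independent and P(B_i = 1) = 1/i for every 2 ≤ i ≤ n. -/
open MeasureTheory ProbabilityTheory
open scoped ENNReal Classical

/-- The record indicator `B_i = I(η_i < min(η₁, …, η_{i−1}))`, as a `{0,1}`-valued
(`Fin 2`-valued) random variable: `B_i = 1` exactly when the `i`-th sample is strictly
smaller than all previous samples (indices `1, …, i−1`). -/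
noncomputable def recordInd {Ω : Type*} (η : ℕ → Ω → ℝ) (i : ℕ) (ω : Ω) : Fin 2 :=
  if η i ω < sInf ((fun j => η j ω) '' {j | 1 ≤ j ∧ j < i}) then 1 else 0

/-!
The `m!` orderings of `m` distinct indices of an i.i.d. atomless family are equally likely
(exchangeability) and almost surely exhaustive (no ties), so each has probability `1 / m!`.
An event `C` built from `B₂, …, B_m` only depends on the ordering of `η₁, …, η_m`, so on each
such ordering it is either certain or impossible; and on an ordering, `B_{m+1} = 1` pins down
the ordering of `η₁, …, η_{m+1}`, which has probability `1 / (m+1)!`. Hence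
`P(B_{m+1} = 1, C) = P(C) / (m + 1)`, and induction on the largest index gives
`P(B_i = 1 for all i ∈ S) = ∏_{i ∈ S} 1 / i`, i.e. independence of the record events.
-/

open Function

theorem Tuple.eq_sort_of_strictMono_comp {α : Type*} [LinearOrder α] {m : ℕ} {x : Fin m → α}
    {σ : Equiv.Perm (Fin m)} (h : StrictMono (x ∘ σ)) : σ = Tuple.sort x :=
  Tuple.eq_sort_iff.2 ⟨h.monotone, fun _ _ hij heq => absurd heq (h hij).ne⟩

theorem Tuple.strictMono_comp_sort {α : Type*} [LinearOrder α] {m : ℕ} {x : Fin m → α}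
    (hx : Injective x) : StrictMono (x ∘ Tuple.sort x) :=
  (Tuple.monotone_sort x).strictMono_of_injective (hx.comp (Tuple.sort x).injective)

theorem lt_iff_lt_of_strictMono_comp_perm {α : Type*} [LinearOrder α] {m : ℕ}
    {x y : Fin m → α} {σ : Equiv.Perm (Fin m)} (hx : StrictMono (x ∘ σ))
    (hy : StrictMono (y ∘ σ)) (k l : Fin m) : x k < x l ↔ y k < y l := by
  simpa using hx.lt_iff_lt.trans (hy.lt_iff_lt (a := σ.symm k) (b := σ.symm l)).symm

theorem measurableSet_setOf_strictMono {α : Type*} [LinearOrder α] [TopologicalSpace α]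
    [OrderClosedTopology α] [SecondCountableTopology α] [MeasurableSpace α]
    [OpensMeasurableSpace α] {m : ℕ} : MeasurableSet {x : Fin m → α | StrictMono x} := by
  simp only [StrictMono, Set.ofPred_forall]
  exact .iInter fun k => .iInter fun l => .iInter fun _ =>
    measurableSet_lt (measurable_pi_apply k) (measurable_pi_apply l)

theorem ProbabilityTheory.IndepFun.ae_ne {Ω : Type*} [MeasurableSpace Ω] {μ : Measure Ω}
    [IsFiniteMeasure μ] {f g : Ω → ℝ} (hfg : IndepFun f g μ) (hf : Measurable f)
    (hg : Measurable g) [NullSingletonClass (μ.map g)] : ∀ᵐ ω ∂μ, f ω ≠ g ω := by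
  have hD : MeasurableSet {p : ℝ × ℝ | p.1 = p.2} := measurableSet_diagonal
  rw [ae_iff]
  calc μ {ω | ¬f ω ≠ g ω} = (μ.map fun ω => (f ω, g ω)) {p | p.1 = p.2} := by
        rw [Measure.map_apply (hf.prodMk hg) hD]; simp [Set.preimage]
    _ = ((μ.map f).prod (μ.map g)) {p | p.1 = p.2} := by
        rw [(indepFun_iff_map_prod_eq_prod_map_map hf.aemeasurable hg.aemeasurable).1 hfg]
    _ = 0 := by simp [Measure.prod_apply hD]

section IIDTuples

variable {Ω ι : Type*} [MeasurableSpace Ω] {μ : Measure Ω} [IsProbabilityMeasure μ]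
  {X : ι → Ω → ℝ} {m : ℕ}

theorem map_tuple_eq_of_injective (hX : ∀ i, Measurable (X i)) (hindep : iIndepFun X μ)
    (hident : ∀ i j, IdentDistrib (X i) (X j) μ μ) {a b : Fin m → ι} (ha : Injective a)
    (hb : Injective b) :
    μ.map (fun ω k => X (a k) ω) = μ.map (fun ω k => X (b k) ω) := by
  rw [(iIndepFun_iff_map_fun_eq_pi_map fun k => (hX (a k)).aemeasurable).1 (hindep.precomp ha),
    (iIndepFun_iff_map_fun_eq_pi_map fun k => (hX (b k)).aemeasurable).1 (hindep.precomp hb)]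
  congr 1
  exact funext fun k => (hident _ _).map_eq

theorem ae_injective_tuple (hX : ∀ i, Measurable (X i)) (hindep : iIndepFun X μ)
    (hatomless : ∀ i, NullSingletonClass (μ.map (X i))) {a : Fin m → ι} (ha : Injective a) :
    ∀ᵐ ω ∂μ, Injective fun k => X (a k) ω := by
  have hne : ∀ᵐ ω ∂μ, ∀ k l, k ≠ l → X (a k) ω ≠ X (a l) ω := by
    simp only [ae_all_iff, Filter.eventually_imp_distrib_left]
    exact fun k l hkl => (hindep.indepFun (ha.ne hkl)).ae_ne (hX _) (hX _)
  filter_upwards [hne] with ω hω k l hkl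
  by_contra h
  exact hω k l h hkl

theorem measure_eq_sum_measure_inter_strictMono (hX : ∀ i, Measurable (X i))
    (hindep : iIndepFun X μ) (hatomless : ∀ i, NullSingletonClass (μ.map (X i)))
    {a : Fin m → ι} (ha : Injective a) {S : Set Ω} (hS : MeasurableSet S) :
    μ S = ∑ σ : Equiv.Perm (Fin m), μ (S ∩ {ω | StrictMono fun k => X (a (σ k)) ω}) := by
  set E : Equiv.Perm (Fin m) → Set Ω := fun σ => {ω | StrictMono fun k => X (a (σ k)) ω}
  have hE (σ) : MeasurableSet (E σ) :=
    measurableSet_setOf_strictMono.preimage (measurable_pi_lambda _ fun k => hX _)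
  have hdisj : Pairwise (Disjoint on E) := fun σ τ hστ => Set.disjoint_left.2 fun ω hσ hτ =>
    hστ <| (Tuple.eq_sort_of_strictMono_comp (x := fun k => X (a k) ω) hσ).trans
      (Tuple.eq_sort_of_strictMono_comp (x := fun k => X (a k) ω) hτ).symm
  have hcover : μ (⋃ σ, E σ)ᶜ = 0 := ae_iff.1 <|
    (ae_injective_tuple hX hindep hatomless ha).mono fun ω hω =>
      Set.mem_iUnion.2 ⟨_, Tuple.strictMono_comp_sort hω⟩
  calc μ S = μ (⋃ σ, S ∩ E σ) := by rw [← Set.inter_iUnion, measure_inter_conull hcover]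
    _ = ∑ σ, μ (S ∩ E σ) := by
      rw [measure_iUnion (fun σ τ h => (hdisj h).mono Set.inter_subset_right
        Set.inter_subset_right) (fun σ => hS.inter (hE σ)), tsum_fintype]

theorem measure_setOf_strictMono_tuple (hX : ∀ i, Measurable (X i)) (hindep : iIndepFun X μ)
    (hident : ∀ i j, IdentDistrib (X i) (X j) μ μ)
    (hatomless : ∀ i, NullSingletonClass (μ.map (X i))) {a : Fin m → ι} (ha : Injective a) :
    μ {ω | StrictMono fun k => X (a k) ω} = (m.factorial : ℝ≥0∞)⁻¹ := by
  have hlaw {b : Fin m → ι} (hb : Injective b) : μ {ω | StrictMono fun k => X (b k) ω} =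
      μ.map (fun ω k => X (a k) ω) {x | StrictMono x} := by
    rw [map_tuple_eq_of_injective hX hindep hident ha hb,
      Measure.map_apply (measurable_pi_lambda _ fun k => hX _) measurableSet_setOf_strictMono]
    rfl
  refine ENNReal.eq_inv_of_mul_eq_one_left ?_
  calc μ {ω | StrictMono fun k => X (a k) ω} * m.factorial
      = ∑ σ : Equiv.Perm (Fin m), μ (Set.univ ∩ {ω | StrictMono fun k => X (a (σ k)) ω}) := by
        simp only [Set.univ_inter]
        rw [Finset.sum_congr rfl fun (σ : Equiv.Perm (Fin m)) _ =>
            hlaw (b := fun k => a (σ k)) (ha.comp σ.injective),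
          Finset.sum_const, Finset.card_univ, Fintype.card_perm, Fintype.card_fin, nsmul_eq_mul,
          hlaw ha, mul_comm]
    _ = 1 := by
        rw [← measure_eq_sum_measure_inter_strictMono hX hindep hatomless ha .univ, measure_univ]

end IIDTuples

def IsOrderDetermined {Ω α : Type*} [LT α] {m : ℕ} (f : Fin m → Ω → α) (C : Set Ω) : Prop :=
  ∀ ω ω', (∀ k l, f k ω < f l ω ↔ f k ω' < f l ω') → (ω ∈ C ↔ ω' ∈ C)

theorem IsOrderDetermined.biInter {Ω α ι : Type*} [LT α] {m : ℕ} {f : Fin m → Ω → α}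
    {s : Set ι} {C : ι → Set Ω} (hC : ∀ i ∈ s, IsOrderDetermined f (C i)) :
    IsOrderDetermined f (⋂ i ∈ s, C i) := fun ω ω' h => by
  simp only [Set.mem_iInter₂]
  exact forall₂_congr fun i hi => hC i hi ω ω' h

theorem measure_forall_lt_inter_of_isOrderDetermined {Ω ι : Type*} [MeasurableSpace Ω]
    {μ : Measure Ω} [IsProbabilityMeasure μ] {X : ι → Ω → ℝ} {m : ℕ}
    (hX : ∀ i, Measurable (X i)) (hindep : iIndepFun X μ)
    (hident : ∀ i j, IdentDistrib (X i) (X j) μ μ)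
    (hatomless : ∀ i, NullSingletonClass (μ.map (X i))) {b : Fin m → ι} (hb : Injective b)
    {i₀ : ι} (hi₀ : i₀ ∉ Set.range b) {C : Set Ω} (hC : MeasurableSet C)
    (hCord : IsOrderDetermined (fun k => X (b k)) C) :
    μ ({ω | ∀ k, X i₀ ω < X (b k) ω} ∩ C) = ((m + 1 : ℕ) : ℝ≥0∞)⁻¹ * μ C := by
  have hA : MeasurableSet {ω | ∀ k, X i₀ ω < X (b k) ω} := by
    simp only [Set.ofPred_forall]
    exact .iInter fun k => measurableSet_lt (hX _) (hX _)
  rw [measure_eq_sum_measure_inter_strictMono hX hindep hatomless hb (hA.inter hC),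
    measure_eq_sum_measure_inter_strictMono hX hindep hatomless hb hC, Finset.mul_sum]
  refine Finset.sum_congr rfl fun σ _ => ?_
  set E := {ω | StrictMono fun k => X (b (σ k)) ω}
  rcases (C ∩ E).eq_empty_or_nonempty with hempty | ⟨ω₀, hω₀C, hω₀E⟩
  · rw [Set.inter_assoc, hempty, Set.inter_empty, measure_empty, mul_zero]
  have hCE : C ∩ E = E := Set.inter_eq_right.2 fun ω hω =>
    (hCord ω ω₀ (lt_iff_lt_of_strictMono_comp_perm hω hω₀E)).2 hω₀C
  have hAE : {ω | ∀ k, X i₀ ω < X (b k) ω} ∩ E =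
      {ω | StrictMono fun k => X ((Fin.cons i₀ (b ∘ σ) : Fin (m + 1) → ι) k) ω} := by
    ext ω
    change _ ↔ StrictMono ((fun i => X i ω) ∘ Fin.cons i₀ (b ∘ σ))
    rw [Fin.comp_cons, Fin.strictMono_cons]
    exact and_congr_left' (σ.forall_congr_right (q := fun k => X i₀ ω < X (b k) ω)).symm
  have hcons : Injective (Fin.cons i₀ (b ∘ σ) : Fin (m + 1) → ι) :=
    Fin.cons_injective_iff.2 ⟨by simpa using hi₀, hb.comp σ.injective⟩
  have hE : μ E = (m.factorial : ℝ≥0∞)⁻¹ :=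
    measure_setOf_strictMono_tuple hX hindep hident hatomless (hb.comp σ.injective)
  rw [Set.inter_assoc, hCE, hAE, hE,
    measure_setOf_strictMono_tuple hX hindep hident hatomless hcons, Nat.factorial_succ,
    Nat.cast_mul, ENNReal.mul_inv (by simp) (by simp)]

def recordSet {Ω : Type*} (η : ℕ → Ω → ℝ) (i : ℕ) : Set Ω :=
  {ω | ∀ j, 1 ≤ j → j < i → η i ω < η j ω}

section Records

variable {Ω : Type*} {η : ℕ → Ω → ℝ}

theorem recordInd_eq_indicator {i : ℕ} (hi : 2 ≤ i) :
    recordInd η i = (recordSet η i).indicator fun _ => 1 := by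
  funext ω
  have hfin : ((fun j => η j ω) '' {j | 1 ≤ j ∧ j < i}).Finite := (Set.finite_Ico 1 i).image _
  have hne : ((fun j => η j ω) '' {j | 1 ≤ j ∧ j < i}).Nonempty :=
    ⟨η 1 ω, 1, ⟨le_rfl, hi⟩, rfl⟩
  simp only [recordInd, Set.indicator_apply, hfin.lt_csInf_iff hne, Set.forall_mem_image,
    recordSet, Set.mem_ofPred_eq, and_imp]

theorem setOf_recordInd_eq_one {i : ℕ} (hi : 2 ≤ i) :
    {ω | recordInd η i ω = 1} = recordSet η i := by
  ext ω
  by_cases hω : ω ∈ recordSet η i <;> simp [recordInd_eq_indicator hi, hω]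

theorem measurableSet_recordSet [MeasurableSpace Ω] (hmeas : ∀ i, Measurable (η i)) (i : ℕ) :
    MeasurableSet (recordSet η i) := by
  simp only [recordSet, Set.ofPred_forall]
  exact .iInter fun j => .iInter fun _ => .iInter fun _ => measurableSet_lt (hmeas i) (hmeas j)

theorem recordSet_succ (m : ℕ) :
    recordSet η (m + 1) = {ω | ∀ k : Fin m, η (m + 1) ω < η (k + 1) ω} := by
  ext ω
  simp only [recordSet, Set.mem_ofPred_eq]
  refine ⟨fun h k => h _ (by omega) (by omega), fun h j hj1 hj => ?_⟩
  simpa [Nat.sub_add_cancel hj1] using h ⟨j - 1, by omega⟩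

theorem isOrderDetermined_recordSet {m i : ℕ} (hi : i ≤ m) :
    IsOrderDetermined (fun k : Fin m => η (k + 1)) (recordSet η i) := fun ω ω' h => by
  simp only [recordSet, Set.mem_ofPred_eq]
  refine forall_congr' fun j => imp_congr_right fun hj1 => imp_congr_right fun hji => ?_
  simpa [Nat.sub_add_cancel hj1, Nat.sub_add_cancel (hj1.trans hji.le)] using
    h ⟨i - 1, by omega⟩ ⟨j - 1, by omega⟩

variable [MeasurableSpace Ω] {μ : Measure Ω} [IsProbabilityMeasure μ] {n : ℕ}

theorem measure_biInter_recordSet (hmeas : ∀ i, Measurable (η i))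
    (hindep : iIndepFun (fun i : (Finset.Icc 1 n : Finset ℕ) => η i) μ)
    (hident : ∀ i j, 1 ≤ i → i ≤ n → 1 ≤ j → j ≤ n → IdentDistrib (η i) (η j) μ μ)
    (hatomless : ∀ i, 1 ≤ i → i ≤ n → NullSingletonClass (μ.map (η i))) {S : Finset ℕ}
    (hS : S ⊆ Finset.Icc 2 n) :
    μ (⋂ i ∈ S, recordSet η i) = ∏ i ∈ S, (i : ℝ≥0∞)⁻¹ := by
  induction S using Finset.induction_on_max with
  | empty => simp
  | insert a s hlt ih =>
    obtain ⟨ha2, han⟩ := Finset.mem_Icc.1 (hS (s.mem_insert_self a))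
    obtain ⟨m, rfl⟩ : ∃ m, a = m + 1 := ⟨a - 1, by omega⟩
    have hident' (i j : (Finset.Icc 1 n : Finset ℕ)) : IdentDistrib (η i) (η j) μ μ :=
      hident i j (Finset.mem_Icc.1 i.2).1 (Finset.mem_Icc.1 i.2).2 (Finset.mem_Icc.1 j.2).1
        (Finset.mem_Icc.1 j.2).2
    have hatomless' (i : (Finset.Icc 1 n : Finset ℕ)) : NullSingletonClass (μ.map (η i)) :=
      hatomless i (Finset.mem_Icc.1 i.2).1 (Finset.mem_Icc.1 i.2).2
    let b : Fin m → (Finset.Icc 1 n : Finset ℕ) := fun k => ⟨k + 1, Finset.mem_Icc.2 (by omega)⟩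
    have hb : Injective b := fun k l h => by simpa [b, Fin.ext_iff] using h
    have hi₀ : (⟨m + 1, Finset.mem_Icc.2 (by omega)⟩ : (Finset.Icc 1 n : Finset ℕ)) ∉
        Set.range b := by
      rintro ⟨k, hk⟩
      simp only [b, Subtype.mk.injEq] at hk
      omega
    have hC : MeasurableSet (⋂ i ∈ s, recordSet η i) :=
      .biInter s.countable_toSet fun i _ => measurableSet_recordSet hmeas i
    have hCord : IsOrderDetermined (fun k : Fin m => η (k + 1)) (⋂ i ∈ s, recordSet η i) :=
      .biInter fun i hi => isOrderDetermined_recordSet (by have := hlt i hi; omega)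
    calc μ (⋂ i ∈ insert (m + 1) s, recordSet η i)
        = μ ({ω | ∀ k : Fin m, η (m + 1) ω < η (k + 1) ω} ∩ ⋂ i ∈ s, recordSet η i) := by
          rw [Finset.set_biInter_insert, recordSet_succ]
      _ = ((m + 1 : ℕ) : ℝ≥0∞)⁻¹ * μ (⋂ i ∈ s, recordSet η i) :=
          measure_forall_lt_inter_of_isOrderDetermined
            (X := fun i : (Finset.Icc 1 n : Finset ℕ) => η i) (fun i => hmeas i) hindep
            hident' hatomless' hb hi₀ hC hCord
      _ = ∏ i ∈ insert (m + 1) s, (i : ℝ≥0∞)⁻¹ := by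
          rw [ih ((s.subset_insert _).trans hS), Finset.prod_insert fun h => (hlt _ h).false]

theorem measure_recordSet (hmeas : ∀ i, Measurable (η i))
    (hindep : iIndepFun (fun i : (Finset.Icc 1 n : Finset ℕ) => η i) μ)
    (hident : ∀ i j, 1 ≤ i → i ≤ n → 1 ≤ j → j ≤ n → IdentDistrib (η i) (η j) μ μ)
    (hatomless : ∀ i, 1 ≤ i → i ≤ n → NullSingletonClass (μ.map (η i))) {i : ℕ} (hi2 : 2 ≤ i)
    (hin : i ≤ n) : μ (recordSet η i) = (i : ℝ≥0∞)⁻¹ := by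
  simpa using measure_biInter_recordSet hmeas hindep hident hatomless (S := {i})
    (by simp [hi2, hin])

theorem iIndepSet_recordSet (hmeas : ∀ i, Measurable (η i))
    (hindep : iIndepFun (fun i : (Finset.Icc 1 n : Finset ℕ) => η i) μ)
    (hident : ∀ i j, 1 ≤ i → i ≤ n → 1 ≤ j → j ≤ n → IdentDistrib (η i) (η j) μ μ)
    (hatomless : ∀ i, 1 ≤ i → i ≤ n → NullSingletonClass (μ.map (η i))) :
    iIndepSet (fun i : (Finset.Icc 2 n : Finset ℕ) => recordSet η i) μ := by
  refine (iIndepSet_iff_meas_biInter (f := fun i : (Finset.Icc 2 n : Finset ℕ) => recordSet η i)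
    fun i => measurableSet_recordSet hmeas i).2 fun s => ?_
  have hprod := measure_biInter_recordSet hmeas hindep hident hatomless
    (S := s.image Subtype.val) (Finset.image_subset_iff.2 fun i _ => i.2)
  rw [Finset.set_biInter_finset_image, Finset.prod_image Subtype.val_injective.injOn] at hprod
  rw [hprod]
  exact Finset.prod_congr rfl fun i _ => (measure_recordSet hmeas hindep hident hatomless
    (Finset.mem_Icc.1 i.2).1 (Finset.mem_Icc.1 i.2).2).symm

end Records

theorem record_indicators_indep_general {Ω : Type*} [MeasurableSpace Ω] (μ : Measure Ω)
    [IsProbabilityMeasure μ] (n : ℕ) (η : ℕ → Ω → ℝ)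
    (hmeas : ∀ i, Measurable (η i))
    (hindep : iIndepFun
      (fun i : (Finset.Icc 1 n : Finset ℕ) => η i) μ)
    (hident : ∀ i j, 1 ≤ i → i ≤ n → 1 ≤ j → j ≤ n → IdentDistrib (η i) (η j) μ μ)
    (hatomless : ∀ i, 1 ≤ i → i ≤ n → NoAtoms (μ.map (η i))) :
    iIndepFun
        (fun (i : (Finset.Icc 2 n : Finset ℕ)) => recordInd η i) μ ∧
      ∀ i, 2 ≤ i → i ≤ n → μ {ω | recordInd η i ω = 1} = 1 / (i : ℝ≥0∞) := by
  refine ⟨?_, fun i hi2 hin => ?_⟩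
  · convert (iIndepSet_recordSet hmeas hindep hident hatomless).iIndepFun_indicator with i
    exact recordInd_eq_indicator (Finset.mem_Icc.1 i.2).1
  · rw [setOf_recordInd_eq_one hi2, measure_recordSet hmeas hindep hident hatomless hi2 hin,
      one_div]

/-- For i.i.d. real random variables `η₁, …, η_n` (`n ≥ 2`) with atomless
common distribution, the record indicators `B₂, …, B_n` are mutually independent and
`P(B_i = 1) = 1 / i` for every `2 ≤ i ≤ n`. -/
theorem record_indicators_indep {Ω : Type*} [MeasurableSpace Ω] (μ : Measure Ω)
    [IsProbabilityMeasure μ] (n : ℕ) (hn : 2 ≤ n) (η : ℕ → Ω → ℝ)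
    (hmeas : ∀ i, Measurable (η i))
    (hindep : iIndepFun
      (fun i : (Finset.Icc 1 n : Finset ℕ) => η i) μ)
    (hident : ∀ i j, 1 ≤ i → i ≤ n → 1 ≤ j → j ≤ n → IdentDistrib (η i) (η j) μ μ)
    (hatomless : ∀ i, 1 ≤ i → i ≤ n → NoAtoms (μ.map (η i))) :
    iIndepFun
        (fun (i : (Finset.Icc 2 n : Finset ℕ)) => recordInd η i) μ ∧
      ∀ i, 2 ≤ i → i ≤ n → μ {ω | recordInd η i ω = 1} = 1 / (i : ℝ≥0∞) :=
  record_indicators_indep_general μ n η hmeas hindep hident hatomless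
end

section
/- Let η₁, η₂, …, η_n (n ≥ 2) be independent, identically distributed real-valued random variables whose common distribution is atomless, and for 2 ≤ i ≤ n let B_i = I(η_i < min(η₁, …, η_{i−1})). Then for every 2 ≤ i ≤ n the conditional entropy H(B_i | B₂, …, B_{i−1}) equals π(i−1) := −((i−1)/i)·log((i−1)/i) − (1/i)·log(1/i). -/
open MeasureTheory ProbabilityTheory
open scoped ENNReal Classical

/-- `π(g) = −(g/(g+1))·log(g/(g+1)) − (1/(g+1))·log(1/(g+1))`, the binary entropy of
`1/(g+1)` (natural logarithm). -/
noncomputable def piFun (g : ℕ) : ℝ :=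
  -((g / (g + 1) : ℝ) * Real.log ((g : ℝ) / (g + 1)))
    - (1 / ((g : ℝ) + 1)) * Real.log (1 / ((g : ℝ) + 1))

/-! Pass to the canonical model: `(η₁, …, η_i)` has law `ν^⊗i`, where `ν` is the common law.
Let `G y = ν (y, ∞)`. There are almost surely no ties and the coordinates are exchangeable, so
each of `m + 1` coordinates is the strict minimum with probability `∫ G^m dν`; hence this
integral is `ν(ℝ)^(m+1) / (m+1)`. Peel off the last coordinate `y`: for it to be a record, the
others must exceed `y`, i.e. they are sampled from `ν` restricted to `(y, ∞)`. Induction on the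
dimension, for all finite atomless `ν` at once, then shows that a record pattern `b` of length
`m` has probability `ν(ℝ)^m ∏ₖ p_k(b_k)` with `p_k(1) = 1/(k+1)`. Hence `B_i` is independent
of `(B₂, …, B_{i-1})` with `P(B_i = 1) = 1/i`, and the conditional entropy is the binary
entropy of `1/i`. -/

open Set

theorem measurableSet_setOf_forall_lt {ι : Type*} [Countable ι] (p : ι → Prop) (k : ι) :
    MeasurableSet {x : ι → ℝ | ∀ j, p j → x k < x j} := by
  simp only [ofPred_forall]
  exact .iInter fun j => .iInter fun _ =>
    measurableSet_lt (measurable_pi_apply k) (measurable_pi_apply j)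

namespace MeasureTheory.Measure

theorem pi_apply_eq_lintegral_insertNth {α : Type*} [MeasurableSpace α] (ν : Measure α)
    [SigmaFinite ν] {m : ℕ} (k : Fin (m + 1)) {S : Set (Fin (m + 1) → α)}
    (hS : MeasurableSet S) :
    Measure.pi (fun _ => ν) S =
      ∫⁻ y, Measure.pi (fun _ => ν) (Fin.insertNth (α := fun _ => α) k y ⁻¹' S) ∂ν := by
  rw [← (measurePreserving_piFinSuccAbove (fun _ => ν) k).symm.measure_preimage
    hS.nullMeasurableSet, prod_apply (hS.preimage (MeasurableEquiv.measurable _))]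
  rfl

variable (ν : Measure ℝ) {m : ℕ}

theorem pi_setOf_eq_null [SigmaFinite ν] [NullSingletonClass ν] {k l : Fin (m + 1)}
    (hkl : k ≠ l) : Measure.pi (fun _ => ν) {x | x k = x l} = 0 := by
  obtain ⟨j, rfl⟩ := Fin.exists_succAbove_eq hkl.symm
  rw [pi_apply_eq_lintegral_insertNth ν k
    (measurableSet_eq_fun (measurable_pi_apply k) (measurable_pi_apply _))]
  refine lintegral_eq_zero_of_ae_eq_zero (ae_of_all _ fun y => ?_)
  have hslice : Fin.insertNth (α := fun _ => ℝ) k y ⁻¹' {x | x k = x (k.succAbove j)} =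
      Function.eval (β := fun _ => ℝ) j ⁻¹' {y} := by
    ext z; simp [eq_comm]
  simpa [hslice] using pi_eval_preimage_null (fun _ => ν) (measure_singleton y)

theorem ae_injective_pi [SigmaFinite ν] [NullSingletonClass ν] :
    ∀ᵐ x ∂Measure.pi (fun _ : Fin (m + 1) => ν), Function.Injective x := by
  refine measure_mono_null (fun x hx => ?_) (measure_iUnion_null fun k => measure_iUnion_null
    fun l => measure_iUnion_null fun (hkl : k ≠ l) => pi_setOf_eq_null ν hkl)
  obtain ⟨k, l, hkl, hne⟩ := Function.not_injective_iff.mp hx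
  exact mem_iUnion_of_mem k (mem_iUnion_of_mem l (mem_iUnion_of_mem hne hkl))

theorem pi_setOf_forall_ne_lt [SigmaFinite ν] (k : Fin (m + 1)) :
    Measure.pi (fun _ => ν) {x | ∀ j ≠ k, x k < x j} = ∫⁻ y, ν (Ioi y) ^ m ∂ν := by
  rw [pi_apply_eq_lintegral_insertNth ν k (measurableSet_setOf_forall_lt _ k)]
  congr with y
  have hslice : Fin.insertNth (α := fun _ => ℝ) k y ⁻¹' {x | ∀ j ≠ k, x k < x j} =
      univ.pi fun _ => Ioi y := by
    ext z; simp [Fin.forall_iff_succAbove k]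
  simp [hslice, pi_pi]

theorem lintegral_measure_Ioi_pow [IsFiniteMeasure ν] [NullSingletonClass ν] (m : ℕ) :
    ∫⁻ y, ν (Ioi y) ^ m ∂ν = ν univ ^ (m + 1) / (m + 1) := by
  rw [ENNReal.eq_div_iff (by positivity) (by simp)]
  set A : Fin (m + 1) → Set (Fin (m + 1) → ℝ) := fun k => {x | ∀ j ≠ k, x k < x j}
  have hdisj : Pairwise (Function.onFun Disjoint A) := fun k l hkl =>
    disjoint_left.mpr fun x hk hl => (hk l hkl.symm).asymm (hl k hkl)
  have hcover : ⋃ k, A k =ᵐ[Measure.pi fun _ => ν] univ := by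
    refine Filter.eventuallyEq_univ.mpr ((ae_injective_pi ν).mono fun x hinj => ?_)
    obtain ⟨k, -, hk⟩ := Finset.univ.exists_min_image x Finset.univ_nonempty
    exact mem_iUnion_of_mem k fun j hjk =>
      (hk j (Finset.mem_univ j)).lt_of_ne (hinj.ne hjk.symm)
  calc (m + 1 : ℝ≥0∞) * ∫⁻ y, ν (Ioi y) ^ m ∂ν = ∑ k, Measure.pi (fun _ => ν) (A k) := by
        simp [A, pi_setOf_forall_ne_lt]
    _ = Measure.pi (fun _ => ν) univ := by
        rw [← measure_congr hcover, measure_iUnion hdisj fun k => measurableSet_setOf_forall_lt _ k,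
          tsum_fintype]
    _ = ν univ ^ (m + 1) := by simp [pi_univ]

end MeasureTheory.Measure

section RecordPattern

variable {α : Type*} [LT α] {m : ℕ}

/-- Coordinates are numbered from `0`, so `recordPattern x k` corresponds to `B_{k+1}`, and the
first coordinate is always a record. -/
noncomputable def recordPattern (x : Fin m → α) (k : Fin m) : Fin 2 :=
  if ∀ j < k, x k < x j then 1 else 0

theorem recordPattern_zero (x : Fin (m + 1) → α) : recordPattern x 0 = 1 := by
  simp [recordPattern]

theorem recordPattern_snoc (z : Fin m → α) (y : α) :
    recordPattern (Fin.snoc z y : Fin (m + 1) → α) =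
      Fin.snoc (recordPattern z) (if ∀ j, y < z j then 1 else 0) := by
  ext k
  induction k using Fin.lastCases with
  | last => simp [recordPattern, Fin.forall_fin_succ']
  | cast k => simp [recordPattern, Fin.forall_fin_succ', (Fin.castSucc_lt_last k).not_gt]

theorem recordPattern_eq_cons_snoc_iff (x : Fin (m + 2) → α) (t : Fin m → Fin 2) (s : Fin 2) :
    recordPattern x = Fin.cons 1 (Fin.snoc t s) ↔
      recordPattern x (Fin.last _) = s ∧ (fun j => recordPattern x j.castSucc.succ) = t := by
  conv_lhs => rw [← Fin.cons_self_tail (recordPattern x), ← Fin.snoc_init_self (Fin.tail _)]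
  rw [Fin.cons_inj, Fin.snoc_inj, recordPattern_zero, Fin.tail, Fin.succ_last]
  exact ⟨fun h => ⟨h.2.2, h.2.1⟩, fun h => ⟨rfl, h.2, h.1⟩⟩

end RecordPattern

theorem measurable_recordPattern_apply {m : ℕ} (k : Fin m) :
    Measurable fun x : Fin m → ℝ => recordPattern x k :=
  Measurable.ite (measurableSet_setOf_forall_lt _ k) measurable_const measurable_const

theorem measurable_recordPattern {m : ℕ} :
    Measurable (recordPattern : (Fin m → ℝ) → Fin m → Fin 2) :=
  measurable_pi_lambda _ measurable_recordPattern_apply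

noncomputable def recordProb (k : ℕ) (v : Fin 2) : ℝ≥0∞ :=
  if v = 1 then 1 / (k + 1) else k / (k + 1)

theorem recordProb_zero_add_recordProb_one (k : ℕ) : recordProb k 0 + recordProb k 1 = 1 := by
  rw [recordProb, recordProb, if_neg zero_ne_one, if_pos rfl, ENNReal.div_add_div_same,
    ENNReal.div_self (by positivity) (by simp)]

theorem recordProb_ne_top (k : ℕ) (v : Fin 2) : recordProb k v ≠ ⊤ := by
  unfold recordProb; split_ifs <;> exact ENNReal.div_ne_top (by simp) (by positivity)

namespace MeasureTheory.Measure

theorem pi_recordPattern_preimage_snoc {m : ℕ} (ν : Measure ℝ) [IsFiniteMeasure ν]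
    [NullSingletonClass ν] {b : Fin m → Fin 2} {Q : ℝ≥0∞} (hQ : Q ≠ ⊤)
    (hb : Measure.pi (fun _ => ν) (recordPattern ⁻¹' {b}) = ν univ ^ m * Q)
    (hb_Ioi : ∀ y, Measure.pi (fun _ => ν) (recordPattern ⁻¹' {b} ∩ univ.pi fun _ => Ioi y) =
      ν (Ioi y) ^ m * Q) (v : Fin 2) :
    Measure.pi (fun _ => ν) (recordPattern ⁻¹' {Fin.snoc b v}) =
      ν univ ^ (m + 1) * (Q * recordProb m v) := by
  set P : Set (Fin m → ℝ) := recordPattern ⁻¹' {b}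
  let H y : Set (Fin m → ℝ) := univ.pi fun _ => Ioi y
  have hslice : ∀ y, Fin.insertNth (α := fun _ => ℝ) (Fin.last m) y ⁻¹'
      (recordPattern ⁻¹' {Fin.snoc b v}) = if v = 1 then P ∩ H y else P \ H y := fun y => by
    ext z
    simp only [mem_preimage, Fin.insertNth_last', mem_singleton_iff, recordPattern_snoc,
      Fin.snoc_inj]
    fin_cases v <;> simp [P, H, and_comm]
  have hrecord : ∫⁻ y, ν (Ioi y) ^ m * Q ∂ν = ν univ ^ (m + 1) * (Q * recordProb m 1) := by
    rw [lintegral_mul_const' _ _ hQ, lintegral_measure_Ioi_pow, recordProb, if_pos rfl,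
      ENNReal.div_eq_inv_mul, ENNReal.div_eq_inv_mul]
    ring
  rw [pi_apply_eq_lintegral_insertNth ν (Fin.last m)
    (measurable_recordPattern (measurableSet_singleton _))]
  simp only [hslice]
  fin_cases v
  · have hsplit : ∀ y, Measure.pi (fun _ => ν) (P \ H y) + ν (Ioi y) ^ m * Q =
        Measure.pi (fun _ => ν) P := fun y => by
      rw [← hb_Ioi, measure_sdiff_add_inter _ (.univ_pi fun _ => measurableSet_Ioi)]
    have hmeas : Measurable fun y => ν (Ioi y) ^ m * Q :=
      ((Antitone.measurable fun y y' h => measure_mono (Ioi_subset_Ioi h)).pow_const m).mul_const Q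
    have htotal : ∫⁻ y, Measure.pi (fun _ => ν) (P \ H y) ∂ν + ∫⁻ y, ν (Ioi y) ^ m * Q ∂ν =
        ν univ ^ (m + 1) * (Q * recordProb m 0) + ν univ ^ (m + 1) * (Q * recordProb m 1) := by
      rw [← lintegral_add_right _ hmeas, lintegral_congr hsplit, lintegral_const, hb, ← mul_add,
        ← mul_add, recordProb_zero_add_recordProb_one, pow_succ]
      ring
    rw [hrecord] at htotal
    simpa using (ENNReal.add_left_inj (ENNReal.mul_ne_top (by finiteness)
      (ENNReal.mul_ne_top hQ (recordProb_ne_top m 1)))).mp htotal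
  · simpa [H, hb_Ioi] using hrecord

theorem pi_recordPattern_preimage {m : ℕ} (ν : Measure ℝ) [IsFiniteMeasure ν]
    [NullSingletonClass ν] (b : Fin m → Fin 2) :
    Measure.pi (fun _ => ν) (recordPattern ⁻¹' {b}) =
      ν univ ^ m * ∏ k : Fin m, recordProb k (b k) := by
  induction m generalizing ν with
  | zero =>
    rw [show (recordPattern : (Fin 0 → ℝ) → _) ⁻¹' {b} = univ from
      eq_univ_of_forall fun _ => Subsingleton.elim _ _]
    simp
  | succ m ih =>
    obtain ⟨b, v, rfl⟩ : ∃ b' v, b = Fin.snoc b' v :=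
      ⟨Fin.init b, _, (Fin.snoc_init_self b).symm⟩
    rw [Fin.prod_univ_castSucc]
    simp only [Fin.snoc_castSucc, Fin.snoc_last, Fin.val_castSucc, Fin.val_last]
    refine pi_recordPattern_preimage_snoc ν
      (ENNReal.prod_ne_top fun _ _ => recordProb_ne_top _ _) (ih ν b) (fun y => ?_) v
    rw [← restrict_apply (measurable_recordPattern (measurableSet_singleton b)), restrict_pi_pi,
      ih, restrict_apply_univ]

end MeasureTheory.Measure

section CondEntropy

variable {Ω S T : Type*} [MeasurableSpace Ω] [Fintype S] [Fintype T] [MeasurableSpace S]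
  [MeasurableSingletonClass S] [MeasurableSpace T] [MeasurableSingletonClass T]
  {X : Ω → S} {Y : Ω → T}

theorem condEntropy_comp {Ω' : Type*} [MeasurableSpace Ω'] (μ : Measure Ω') {g : Ω' → Ω}
    (hg : Measurable g) (hX : Measurable X) (hY : Measurable Y) :
    condEntropy μ (X ∘ g) (Y ∘ g) = condEntropy (μ.map g) X Y := by
  have hjoint : ∀ s t, μ.map g (X ⁻¹' {s} ∩ Y ⁻¹' {t}) = μ ((X ∘ g) ⁻¹' {s} ∩ (Y ∘ g) ⁻¹' {t}) :=
    fun s t => Measure.map_apply hg ((hX (measurableSet_singleton s)).inter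
      (hY (measurableSet_singleton t)))
  have hmarg : ∀ t, μ.map g (Y ⁻¹' {t}) = μ ((Y ∘ g) ⁻¹' {t}) :=
    fun t => Measure.map_apply hg (hY (measurableSet_singleton t))
  simp only [condEntropy, hjoint, hmarg]

theorem condEntropy_eq_of_measure_inter_eq_mul {μ : Measure Ω} [IsProbabilityMeasure μ]
    (hX : Measurable X) (hY : Measurable Y)
    (a : S → ℝ≥0∞) (f : T → ℝ≥0∞) (ha : ∑ s, a s = 1)
    (h : ∀ s t, μ (X ⁻¹' {s} ∩ Y ⁻¹' {t}) = a s * f t) :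
    condEntropy μ X Y = -∑ s, (a s).toReal * Real.log (a s).toReal := by
  have hYf : ∀ t, μ (Y ⁻¹' {t}) = f t := fun t => by
    rw [← one_mul (f t), ← ha, Finset.sum_mul]
    simp_rw [← h, ← Measure.restrict_apply (hX (measurableSet_singleton _))]
    rw [sum_measure_preimage_singleton _ fun s _ => hX (measurableSet_singleton s),
      Finset.coe_univ, preimage_univ, Measure.restrict_apply_univ]
  have hf : ∑ t, (f t).toReal = 1 := by
    rw [← ENNReal.toReal_sum fun t _ => hYf t ▸ measure_ne_top μ _, ← Finset.sum_congr rfl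
      fun t _ => hYf t, sum_measure_preimage_singleton _ fun t _ => hY (measurableSet_singleton t)]
    simp
  have hterm : ∀ s t, (μ (X ⁻¹' {s} ∩ Y ⁻¹' {t})).toReal *
      Real.log ((μ (X ⁻¹' {s} ∩ Y ⁻¹' {t})).toReal / (μ (Y ⁻¹' {t})).toReal) =
      (a s).toReal * Real.log (a s).toReal * (f t).toReal := fun s t => by
    rw [h, hYf, ENNReal.toReal_mul]
    rcases eq_or_ne (f t).toReal 0 with hft | hft
    · simp [hft]
    · rw [mul_div_cancel_right₀ _ hft]
      ring
  simp_rw [condEntropy, hterm, ← Finset.mul_sum, hf, mul_one]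

end CondEntropy

theorem recordInd_eq_recordPattern {Ω : Type*} (η : ℕ → Ω → ℝ) (ω : Ω) {i : ℕ} {k : Fin i}
    (hk : 0 < (k : ℕ)) :
    recordInd η (k + 1) ω = recordPattern (fun j : Fin i => η (j + 1) ω) k := by
  have hne : ((fun j => η j ω) '' {j | 1 ≤ j ∧ j < k + 1}).Nonempty :=
    ⟨η 1 ω, 1, ⟨le_rfl, by omega⟩, rfl⟩
  have hfin : ((fun j => η j ω) '' {j | 1 ≤ j ∧ j < k + 1}).Finite :=
    (finite_Ico 1 ((k : ℕ) + 1)).image _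
  simp only [recordInd, recordPattern, hfin.lt_csInf_iff hne, forall_mem_image]
  congr 1
  refine propext ⟨fun h j hj => h ⟨by omega, by omega⟩, fun h j ⟨hj1, hjk⟩ => ?_⟩
  obtain ⟨j, rfl⟩ : ∃ j', j = j' + 1 := ⟨j - 1, by omega⟩
  exact h (j := ⟨j, by omega⟩) (Fin.lt_def.mpr (by simp; omega))

theorem piFun_eq_neg_sum_recordProb (g : ℕ) :
    piFun g = -∑ v : Fin 2, (recordProb g v).toReal * Real.log (recordProb g v).toReal := by
  have h0 : (recordProb g 0).toReal = g / (g + 1) := by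
    simp [recordProb, ENNReal.toReal_div, ENNReal.toReal_add]
  have h1 : (recordProb g 1).toReal = 1 / (g + 1) := by
    simp [recordProb, ENNReal.toReal_add]
  rw [piFun, Fin.sum_univ_two, h0, h1]
  ring

theorem ProbabilityTheory.iIndepFun.map_comp_eq_pi {Ω ι κ β : Type*} [MeasurableSpace Ω]
    {μ : Measure Ω} [IsProbabilityMeasure μ] [Fintype κ] [MeasurableSpace β] {X : ι → Ω → β}
    (hind : iIndepFun X μ) {g : κ → ι} (hX : ∀ k, AEMeasurable (X (g k)) μ)
    (hg : g.Injective) {ν : Measure β} (hν : ∀ k, μ.map (X (g k)) = ν) :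
    μ.map (fun ω k => X (g k) ω) = Measure.pi fun _ => ν := by
  rw [(iIndepFun_iff_map_fun_eq_pi_map hX).mp (hind.precomp hg)]
  simp_rw [hν]

theorem condEntropy_pi_recordPattern_last (ν : Measure ℝ) [IsProbabilityMeasure ν]
    [NullSingletonClass ν] (m : ℕ) :
    condEntropy (Measure.pi fun _ : Fin (m + 2) => ν) (fun x => recordPattern x (Fin.last _))
      (fun x (j : Fin m) => recordPattern x j.castSucc.succ) = piFun (m + 1) := by
  rw [piFun_eq_neg_sum_recordProb]
  refine condEntropy_eq_of_measure_inter_eq_mul (measurable_recordPattern_apply _)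
    (measurable_pi_lambda _ fun j => measurable_recordPattern_apply _)
    (recordProb (m + 1)) (fun t => ∏ j : Fin m, recordProb (j + 1) (t j))
    (by rw [Fin.sum_univ_two, recordProb_zero_add_recordProb_one]) fun s t => ?_
  have hfiber : (fun x => recordPattern x (Fin.last _)) ⁻¹' {s} ∩
      (fun x (j : Fin m) => recordPattern x j.castSucc.succ) ⁻¹' {t} =
      (recordPattern : (Fin (m + 2) → ℝ) → _) ⁻¹' {Fin.cons 1 (Fin.snoc t s)} := by
    ext x
    simp [recordPattern_eq_cons_snoc_iff]
  rw [hfiber, Measure.pi_recordPattern_preimage, measure_univ, one_pow, one_mul,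
    Fin.prod_univ_succ, Fin.prod_univ_castSucc]
  simp only [Fin.cons_zero, Fin.cons_succ, Fin.snoc_castSucc, Fin.snoc_last, Fin.val_succ,
    Fin.val_castSucc, Fin.val_last, Fin.val_zero]
  simp [recordProb, mul_comm]

theorem condEntropy_record_indicator_general {Ω : Type*} [MeasurableSpace Ω] (μ : Measure Ω)
    [IsProbabilityMeasure μ] (n : ℕ) (η : ℕ → Ω → ℝ)
    (hmeas : ∀ i, Measurable (η i))
    (hindep : iIndepFun
      (fun i : (Finset.Icc 1 n : Finset ℕ) => η i) μ)
    (hident : ∀ i j, 1 ≤ i → i ≤ n → 1 ≤ j → j ≤ n → IdentDistrib (η i) (η j) μ μ)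
    (hatomless : ∀ i, 1 ≤ i → i ≤ n → NoAtoms (μ.map (η i))) :
    ∀ i, 2 ≤ i → i ≤ n →
      condEntropy μ (recordInd η i) (fun ω (j : Fin (i - 2)) => recordInd η (j.1 + 2) ω)
        = piFun (i - 1) := by
  intro i hi hin
  obtain ⟨m, rfl⟩ : ∃ m, i = m + 2 := ⟨i - 2, by omega⟩
  have : IsProbabilityMeasure (μ.map (η 1)) :=
    Measure.isProbabilityMeasure_map (hmeas 1).aemeasurable
  have : NullSingletonClass (μ.map (η 1)) := hatomless 1 le_rfl (by omega)
  set T : Ω → Fin (m + 2) → ℝ := fun ω j => η (j + 1) ω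
  have hT : Measurable T := measurable_pi_lambda _ fun j => hmeas _
  have hlaw : μ.map T = Measure.pi fun _ => μ.map (η 1) :=
    hindep.map_comp_eq_pi
      (g := fun j : Fin (m + 2) => ⟨j + 1, Finset.mem_Icc.mpr ⟨by omega, by omega⟩⟩)
      (fun _ => (hmeas _).aemeasurable) (fun j j' h => Fin.ext (by simpa using h))
      fun j => (hident (j + 1) 1 (by omega) (by omega) le_rfl (by omega)).map_eq
  have hB : recordInd η (m + 2) = (fun x => recordPattern x (Fin.last _)) ∘ T :=
    funext fun ω => recordInd_eq_recordPattern η ω (k := Fin.last _) (by simp)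
  have hY : (fun ω (j : Fin (m + 2 - 2)) => recordInd η (j.1 + 2) ω) =
      (fun x (j : Fin m) => recordPattern x j.castSucc.succ) ∘ T :=
    funext fun ω => funext fun j => recordInd_eq_recordPattern η ω (k := j.castSucc.succ) (by simp)
  rw [hB, hY, condEntropy_comp μ hT (measurable_recordPattern_apply _)
    (measurable_pi_lambda (fun x (j : Fin m) => recordPattern x j.castSucc.succ) fun j =>
      measurable_recordPattern_apply _), hlaw]
  exact condEntropy_pi_recordPattern_last _ m

/-- For i.i.d. real random variables `η₁, …, η_n` (`n ≥ 2`) with atomless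
common distribution and record indicators `B_i = I(η_i < min(η₁, …, η_{i−1}))`, for every
`2 ≤ i ≤ n` the conditional entropy `H(B_i | B₂, …, B_{i−1})` equals `π(i−1)`. -/
theorem condEntropy_record_indicator {Ω : Type*} [MeasurableSpace Ω] (μ : Measure Ω)
    [IsProbabilityMeasure μ] (n : ℕ) (hn : 2 ≤ n) (η : ℕ → Ω → ℝ)
    (hmeas : ∀ i, Measurable (η i))
    (hindep : iIndepFun
      (fun i : (Finset.Icc 1 n : Finset ℕ) => η i) μ)
    (hident : ∀ i j, 1 ≤ i → i ≤ n → 1 ≤ j → j ≤ n → IdentDistrib (η i) (η j) μ μ)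
    (hatomless : ∀ i, 1 ≤ i → i ≤ n → NoAtoms (μ.map (η i))) :
    ∀ i, 2 ≤ i → i ≤ n →
      condEntropy μ (recordInd η i) (fun ω (j : Fin (i - 2)) => recordInd η (j.1 + 2) ω)
        = piFun (i - 1) :=
  condEntropy_record_indicator_general μ n η hmeas hindep hident hatomless
end
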